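/- arXiv:2509.18773 — 13 statements merged into one kernel-verified Lean document; each statement's English description precedes it below -/
import Mathlib

section
/- The inverse B_G = (L_G + I)^{-1} is a doubly stochastic matrix: it is entrywise nonnegative and each of its row sums and column sums equals 1. -/
open Matrix Finset

theorem inverse_modified_laplacian_doubly_stochastic
    {n : ℕ} (G : SimpleGraph (Fin n)) [DecidableRel G.Adj]
    (B : Matrix (Fin n) (Fin n) ℝ) (hB : B = (G.lapMatrix ℝ + 1)⁻¹) :
    (∀ i j, 0 ≤ B i j) ∧ (∀ i, ∑ j, B i j = 1) ∧ (∀ j, ∑ i, B i j = 1) := by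
  set M : Matrix (Fin n) (Fin n) ℝ := G.lapMatrix ℝ + 1 with hM
  have hpd : M.PosDef := Matrix.PosDef.posSemidef_add (SimpleGraph.posSemidef_lapMatrix ℝ G) Matrix.PosDef.one
  have hunit : IsUnit M := hpd.isUnit
  have hMB : M * B = 1 := by rw [hB]; exact mul_nonsing_inv M ((Matrix.isUnit_iff_isUnit_det M).mp hunit)
  have hBM : B * M = 1 := by rw [hB]; exact nonsing_inv_mul M ((Matrix.isUnit_iff_isUnit_det M).mp hunit)
  -- M *ᵥ 1 = 1
  have hMones : M *ᵥ (fun _ => (1:ℝ)) = fun _ => 1 := by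
    rw [hM, add_mulVec, G.lapMatrix_mulVec_const_eq_zero, one_mulVec]
    simp
  have hrow : ∀ i, ∑ j, B i j = 1 := by
    intro i
    have : (B *ᵥ (fun _ => (1:ℝ))) i = 1 := by
      have : B *ᵥ (M *ᵥ (fun _ => (1:ℝ))) = fun _ => 1 := by
        rw [mulVec_mulVec, hBM, one_mulVec]
      rw [hMones] at this
      rw [this]
    simpa [mulVec, dotProduct] using this
  have hsymmM : Mᵀ = M := by
    rw [hM, transpose_add, transpose_one]
    congr 1
    exact G.isSymm_lapMatrix (R := ℝ)
  have hsymmB : Bᵀ = B := by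
    rw [hB, transpose_nonsing_inv, hsymmM]
  have hcol : ∀ j, ∑ i, B i j = 1 := by
    intro j
    have := hrow j
    calc ∑ i, B i j = ∑ i, Bᵀ j i := by simp [transpose_apply]
    _ = ∑ i, B j i := by rw [hsymmB]
    _ = 1 := hrow j
  refine ⟨?_, hrow, hcol⟩
  -- nonnegativity
  intro i j
  by_contra hneg
  push_neg at hneg
  -- x = column j of B
  set x : Fin n → ℝ := fun k => B k j with hx
  have hMx : M *ᵥ x = fun k => (1 : Matrix (Fin n) (Fin n) ℝ) k j := by
    funext k
    have := congrFun (congrFun hMB k) j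
    simpa [mulVec, dotProduct, Matrix.mul_apply, hx] using this
  -- pick minimizer
  obtain ⟨i₀, _, hmin⟩ := Finset.exists_min_image Finset.univ x ⟨i, Finset.mem_univ i⟩
  have hi₀neg : x i₀ < 0 := lt_of_le_of_lt (hmin i (Finset.mem_univ i)) hneg
  have hle : (M *ᵥ x) i₀ ≤ x i₀ := by
    have hlap : (G.lapMatrix ℝ *ᵥ x) i₀ ≤ 0 := by
      rw [G.lapMatrix_mulVec_apply]
      have : (G.degree i₀ : ℝ) * x i₀ ≤ ∑ u ∈ G.neighborFinset i₀, x u := by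
        calc (G.degree i₀ : ℝ) * x i₀ = ∑ u ∈ G.neighborFinset i₀, x i₀ := by
              rw [Finset.sum_const, nsmul_eq_mul, G.card_neighborFinset_eq_degree]
        _ ≤ ∑ u ∈ G.neighborFinset i₀, x u :=
              Finset.sum_le_sum fun u _ => hmin u (Finset.mem_univ u)
      linarith
    have : (M *ᵥ x) i₀ = (G.lapMatrix ℝ *ᵥ x) i₀ + x i₀ := by
      rw [hM, add_mulVec]
      simp [one_mulVec]
    linarith
  have hge : (0:ℝ) ≤ (M *ᵥ x) i₀ := by
    rw [hMx]
    by_cases h : i₀ = j <;> simp [Matrix.one_apply, h]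
  linarith
end

section
/- Let B_{P_n} = [b_{ij}] be the inverse of \tilde{L}_{P_n} = L_{P_n} + I_n for the path P_n. Then b_{ij} \ge 2 b_{i,j+1} for 1 \le i \le j \le n-1, and b_{ij} \ge 2 b_{i,j-1} for 2 \le j \le i \le n. In particular B_{P_n} is d-monotone: in each row, the entries strictly decrease moving away from the diagonal in either direction. -/
open Matrix SimpleGraph Finset


noncomputable def pB (n : ℕ) : Matrix (Fin n) (Fin n) ℝ :=
  Matrix.of fun i j =>
    ((Nat.fib (2 * min i.val j.val + 1) : ℝ) * Nat.fib (2 * (n - 1 - max i.val j.val) + 1))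
      / Nat.fib (2 * n)

lemma fib1N (m : ℕ) : Nat.fib (m + 4) + Nat.fib m = 3 * Nat.fib (m + 2) := by
  have h2 : Nat.fib (m+2) = Nat.fib m + Nat.fib (m+1) := Nat.fib_add_two
  have h3 : Nat.fib (m+3) = Nat.fib (m+1) + Nat.fib (m+2) := Nat.fib_add_two
  have h4 : Nat.fib (m+4) = Nat.fib (m+2) + Nat.fib (m+3) := Nat.fib_add_two
  omega

lemma fib2N (a c : ℕ) :
    Nat.fib (a + 2) * Nat.fib (c + 2) = Nat.fib (a + c + 2) + Nat.fib a * Nat.fib c := by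
  have h := Nat.fib_add a (c + 1)
  have h2 : Nat.fib (a+2) = Nat.fib a + Nat.fib (a+1) := Nat.fib_add_two
  have h3 : Nat.fib (c+2) = Nat.fib c + Nat.fib (c+1) := Nat.fib_add_two
  have h4 : a + c + 2 = a + (c + 1) + 1 := by ring
  rw [h4, h, h2, h3]; ring

/-- recurrence, real version, canonical indices -/
lemma I1 (e : ℕ) : (Nat.fib (2*e+5) : ℝ) + Nat.fib (2*e+1) = 3 * Nat.fib (2*e+3) := by
  have h := fib1N (2*e+1)
  have e1 : 2*e+1+4 = 2*e+5 := by omega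
  have e2 : 2*e+1+2 = 2*e+3 := by omega
  rw [e1, e2] at h
  exact_mod_cast h

/-- interior diagonal identity -/
lemma I2 (s e : ℕ) : 3 * (Nat.fib (2*s+3) : ℝ) * Nat.fib (2*e+3) =
    Nat.fib (2*s+2*e+6) + Nat.fib (2*s+3) * Nat.fib (2*e+1)
      + Nat.fib (2*s+1) * Nat.fib (2*e+3) := by
  have h1 := I1 e
  have h2 := fib2N (2*s+1) (2*e+3)
  have e1 : 2*s+1+2 = 2*s+3 := by omega
  have e2 : 2*e+3+2 = 2*e+5 := by omega
  have e3 : 2*s+1+(2*e+3)+2 = 2*s+2*e+6 := by omega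
  rw [e1, e2, e3] at h2
  have h2' : (Nat.fib (2*s+3) : ℝ) * Nat.fib (2*e+5) =
      Nat.fib (2*s+2*e+6) + Nat.fib (2*s+1) * Nat.fib (2*e+3) := by exact_mod_cast h2
  nlinarith [h1, h2']

/-- boundary diagonal identity -/
lemma I3 (e : ℕ) : (Nat.fib (2*e+4) : ℝ) + Nat.fib (2*e+1) = 2 * Nat.fib (2*e+3) := by
  have h2 : Nat.fib (2*e+2) = Nat.fib (2*e) + Nat.fib (2*e+1) := Nat.fib_add_two
  have h3 : Nat.fib (2*e+3) = Nat.fib (2*e+1) + Nat.fib (2*e+2) := Nat.fib_add_two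
  have h4 : Nat.fib (2*e+4) = Nat.fib (2*e+2) + Nat.fib (2*e+3) := Nat.fib_add_two
  have : Nat.fib (2*e+4) + Nat.fib (2*e+1) = 2 * Nat.fib (2*e+3) := by omega
  exact_mod_cast this

lemma P1 (e : ℕ) : 2 * (Nat.fib (2*e+1) : ℝ) ≤ Nat.fib (2*e+3) := by
  have h3 : Nat.fib (2*e+3) = Nat.fib (2*e+1) + Nat.fib (2*e+2) := Nat.fib_add_two
  have h : Nat.fib (2*e+1) ≤ Nat.fib (2*e+2) := Nat.fib_le_fib_succ
  have : 2 * Nat.fib (2*e+1) ≤ Nat.fib (2*e+3) := by omega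
  exact_mod_cast this

lemma P2 {a b : ℕ} (h : a < b) : (Nat.fib (2*a+1) : ℝ) < Nat.fib (2*b+1) := by
  have h1 : Nat.fib (2*a+3) = Nat.fib (2*a+1) + Nat.fib (2*a+2) := Nat.fib_add_two
  have h2 : 0 < Nat.fib (2*a+2) := Nat.fib_pos.mpr (by omega)
  have h3 : Nat.fib (2*a+3) ≤ Nat.fib (2*b+1) := Nat.fib_mono (by omega)
  have : Nat.fib (2*a+1) < Nat.fib (2*b+1) := by omega
  exact_mod_cast this


lemma ite_or_split {P Q : Prop} [Decidable P] [Decidable Q] (h : ¬(P ∧ Q)) (x : ℝ) :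
    (if P ∨ Q then x else 0) = (if P then x else 0) + (if Q then x else 0) := by
  by_cases hP : P <;> by_cases hQ : Q <;> simp [hP, hQ] <;> tauto

lemma sum_ite_succ {n : ℕ} (t : ℕ) (f : Fin n → ℝ) :
    (∑ u : Fin n, if t = u.val then f u else 0) = if h : t < n then f ⟨t, h⟩ else 0 := by
  split_ifs with h
  · rw [Finset.sum_eq_single (⟨t, h⟩ : Fin n)]
    · simp
    · intro b _ hb
      rw [if_neg]
      intro hc
      exact hb (by ext; simp; omega)
    · simp
  · apply Finset.sum_eq_zero
    intro u _
    rw [if_neg]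
    intro hc
    exact h (hc ▸ u.isLt)

lemma sum_ite_pred {n : ℕ} (t : ℕ) (ht : t < n) (f : Fin n → ℝ) :
    (∑ u : Fin n, if u.val + 1 = t then f u else 0) =
      if h : 0 < t then f ⟨t - 1, by omega⟩ else 0 := by
  split_ifs with h
  · rw [Finset.sum_eq_single (⟨t - 1, by omega⟩ : Fin n)]
    · simp; omega
    · intro b _ hb
      rw [if_neg]
      intro hc
      exact hb (by ext; simp; omega)
    · simp
  · apply Finset.sum_eq_zero
    intro u _
    rw [if_neg]
    omega

lemma path_sum_nbr {n : ℕ} (inst : DecidableRel (pathGraph n).Adj) (i : Fin n) (f : Fin n → ℝ) :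
    ∑ u ∈ (pathGraph n).neighborFinset i, f u =
      (if h : i.val + 1 < n then f ⟨i.val + 1, h⟩ else 0) +
      (if h : 0 < i.val then f ⟨i.val - 1, lt_of_le_of_lt (Nat.sub_le _ _) i.isLt⟩ else 0) := by
  rw [neighborFinset_eq_filter, Finset.sum_filter]
  have h1 : ∀ u : Fin n, (if (pathGraph n).Adj i u then f u else 0) =
      (if i.val + 1 = u.val then f u else 0) + (if u.val + 1 = i.val then f u else 0) := by
    intro u
    rw [if_congr pathGraph_adj rfl rfl, ite_or_split (by omega)]
  simp_rw [h1]
  rw [Finset.sum_add_distrib, sum_ite_succ, sum_ite_pred i.val i.isLt]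

lemma key (n : ℕ) (inst : DecidableRel (pathGraph n).Adj) :
    ((pathGraph n).lapMatrix ℝ + 1) * pB n = 1 := by
  ext i j
  have hn : 0 < n := i.pos
  have hF : (0:ℝ) < Nat.fib (2*n) := by exact_mod_cast Nat.fib_pos.mpr (by omega)
  have hF' : (Nat.fib (2*n) : ℝ) ≠ 0 := ne_of_gt hF
  rw [Matrix.add_mul, Matrix.one_mul, Matrix.add_apply, Matrix.one_apply]
  have hcol : ((pathGraph n).lapMatrix ℝ * pB n) i j =
      (pathGraph n).degree i * pB n i j - ∑ u ∈ (pathGraph n).neighborFinset i, pB n u j := by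
    have h0 : ((pathGraph n).lapMatrix ℝ * pB n) i j
        = ((pathGraph n).lapMatrix ℝ *ᵥ fun k => pB n k j) i := rfl
    rw [h0, lapMatrix_mulVec_apply]
  have hdeg : ((pathGraph n).degree i : ℝ) * pB n i j
      = ∑ u ∈ (pathGraph n).neighborFinset i, pB n i j := by
    rw [Finset.sum_const, ← card_neighborFinset_eq_degree, nsmul_eq_mul]
  rw [hcol, hdeg, ← Finset.sum_sub_distrib, path_sum_nbr inst i]
  simp only [pB, Matrix.of_apply]
  rcases lt_trichotomy i.val j.val with hij | hij | hij
  · -- i < j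
    have hjn := j.isLt
    rw [dif_pos (show i.val + 1 < n by omega), if_neg (Fin.ne_of_val_ne (by omega))]
    by_cases h0 : 0 < i.val
    · -- interior row
      rw [dif_pos h0]
      obtain ⟨s, hs⟩ : ∃ s, i.val = s + 1 := ⟨i.val - 1, by omega⟩
      rw [show min i.val j.val = s + 1 by omega, show max i.val j.val = j.val by omega,
        show min (i.val + 1) j.val = s + 2 by omega, show max (i.val + 1) j.val = j.val by omega,
        show min (i.val - 1) j.val = s by omega, show max (i.val - 1) j.val = j.val by omega,
        show 2 * (s + 1) + 1 = 2*s+3 by ring, show 2 * (s + 2) + 1 = 2*s+5 by ring]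
      field_simp
      linear_combination (-1 : ℝ) * (Nat.fib (2 * (n - 1 - j.val) + 1) : ℝ) * I1 s
    · -- i = 0
      rw [dif_neg h0]
      rw [show min i.val j.val = 0 by omega, show max i.val j.val = j.val by omega,
        show min (i.val + 1) j.val = 1 by omega, show max (i.val + 1) j.val = j.val by omega]
      have f1 : (Nat.fib (2*0+1) : ℝ) = 1 := by norm_num
      have f3 : (Nat.fib (2*1+1) : ℝ) = 2 := by norm_num [Nat.fib]
      rw [f1, f3]
      field_simp
      ring
  · -- i = j
    rw [if_pos (Fin.ext hij)]
    by_cases h1 : i.val + 1 < n <;> by_cases h0 : 0 < i.val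
    · -- interior diagonal
      rw [dif_pos h1, dif_pos h0]
      obtain ⟨s, hs⟩ : ∃ s, i.val = s + 1 := ⟨i.val - 1, by omega⟩
      obtain ⟨e, he⟩ : ∃ e, n - 1 - i.val = e + 1 := ⟨n - 2 - i.val, by omega⟩
      rw [show min i.val j.val = s + 1 by omega, show max i.val j.val = s + 1 by omega,
        show min (i.val + 1) j.val = s + 1 by omega, show max (i.val + 1) j.val = s + 2 by omega,
        show min (i.val - 1) j.val = s by omega, show max (i.val - 1) j.val = s + 1 by omega,
        show n - 1 - (s + 1) = e + 1 by omega, show n - 1 - (s + 2) = e by omega,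
        show 2 * (s + 1) + 1 = 2*s+3 by ring, show 2 * (e + 1) + 1 = 2*e+3 by ring,
        show 2 * n = 2*s+2*e+6 by omega]
      have hG : (Nat.fib (2*s+2*e+6) : ℝ) ≠ 0 := by
        have : 0 < Nat.fib (2*s+2*e+6) := Nat.fib_pos.mpr (by omega)
        exact_mod_cast this.ne'
      field_simp
      linear_combination I2 s e
    · -- i = 0, n ≥ 2
      rw [dif_pos h1, dif_neg h0]
      obtain ⟨e, he⟩ : ∃ e, n - 1 - i.val = e + 1 := ⟨n - 2 - i.val, by omega⟩
      rw [show min i.val j.val = 0 by omega, show max i.val j.val = 0 by omega,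
        show min (i.val + 1) j.val = 0 by omega, show max (i.val + 1) j.val = 1 by omega,
        show n - 1 - 0 = e + 1 by omega, show n - 1 - 1 = e by omega,
        show 2 * (e + 1) + 1 = 2*e+3 by ring, show 2 * n = 2*e+4 by omega]
      have f1 : (Nat.fib (2*0+1) : ℝ) = 1 := by norm_num
      rw [f1]
      have hG : (Nat.fib (2*e+4) : ℝ) ≠ 0 := by
        have : 0 < Nat.fib (2*e+4) := Nat.fib_pos.mpr (by omega)
        exact_mod_cast this.ne'
      field_simp
      linear_combination (-1 : ℝ) * I3 e
    · -- i = n - 1 > 0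
      rw [dif_neg h1, dif_pos h0]
      obtain ⟨s, hs⟩ : ∃ s, i.val = s + 1 := ⟨i.val - 1, by omega⟩
      rw [show min i.val j.val = s + 1 by omega, show max i.val j.val = s + 1 by omega,
        show min (i.val - 1) j.val = s by omega, show max (i.val - 1) j.val = s + 1 by omega,
        show n - 1 - (s + 1) = 0 by omega,
        show 2 * (s + 1) + 1 = 2*s+3 by ring, show 2 * n = 2*s+4 by omega]
      have f1 : (Nat.fib (2*0+1) : ℝ) = 1 := by norm_num
      rw [f1]
      have hG : (Nat.fib (2*s+4) : ℝ) ≠ 0 := by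
        have : 0 < Nat.fib (2*s+4) := Nat.fib_pos.mpr (by omega)
        exact_mod_cast this.ne'
      field_simp
      linear_combination (-1 : ℝ) * I3 s
    · -- n = 1
      rw [dif_neg h1, dif_neg h0]
      rw [show min i.val j.val = 0 by omega, show max i.val j.val = 0 by omega,
        show n - 1 - 0 = 0 by omega, show 2 * n = 2 by omega]
      norm_num [Nat.fib]
  · -- i > j
    rw [if_neg (Fin.ne_of_val_ne (by omega))]
    rw [dif_pos (show 0 < i.val by omega)]
    by_cases h1 : i.val + 1 < n
    · -- interior row
      rw [dif_pos h1]
      obtain ⟨e, he⟩ : ∃ e, n - 1 - i.val = e + 1 := ⟨n - 2 - i.val, by omega⟩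
      rw [show min i.val j.val = j.val by omega, show max i.val j.val = i.val by omega,
        show min (i.val + 1) j.val = j.val by omega, show max (i.val + 1) j.val = i.val + 1 by omega,
        show min (i.val - 1) j.val = j.val by omega, show max (i.val - 1) j.val = i.val - 1 by omega,
        show n - 1 - i.val = e + 1 by omega, show n - 1 - (i.val + 1) = e by omega,
        show n - 1 - (i.val - 1) = e + 2 by omega,
        show 2 * (e + 1) + 1 = 2*e+3 by ring, show 2 * (e + 2) + 1 = 2*e+5 by ring]
      field_simp
      linear_combination (-1 : ℝ) * (Nat.fib (2 * j.val + 1) : ℝ) * I1 e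
    · -- i = n - 1
      rw [dif_neg h1]
      rw [show min i.val j.val = j.val by omega, show max i.val j.val = i.val by omega,
        show min (i.val - 1) j.val = j.val by omega, show max (i.val - 1) j.val = i.val - 1 by omega,
        show n - 1 - i.val = 0 by omega, show n - 1 - (i.val - 1) = 1 by omega]
      have f1 : (Nat.fib (2*0+1) : ℝ) = 1 := by norm_num
      have f3 : (Nat.fib (2*1+1) : ℝ) = 2 := by norm_num [Nat.fib]
      rw [f1, f3]
      field_simp
      ring


lemma half_le {F x y : ℝ} (hF : 0 < F) (h : 2 * x ≤ y) : 2 * (x / F) ≤ y / F := by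
  rw [show 2 * (x / F) = (2 * x) / F from by ring]
  exact div_le_div_of_nonneg_right h hF.le |>.trans_eq rfl

lemma fibR_pos (k : ℕ) : (0 : ℝ) < Nat.fib (2 * k + 1) := by
  exact_mod_cast Nat.fib_pos.mpr (by omega)

/-- The inverse of the modified Laplacian of the path graph on `n` vertices. -/
noncomputable def pathB (n : ℕ) : Matrix (Fin n) (Fin n) ℝ :=
  letI : DecidableRel (SimpleGraph.pathGraph n).Adj := Classical.decRel _
  ((SimpleGraph.pathGraph n).lapMatrix ℝ + 1)⁻¹

lemma pathB_eq (n : ℕ) : pathB n = pB n := by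
  letI inst : DecidableRel (SimpleGraph.pathGraph n).Adj := Classical.decRel _
  have h : pathB n = ((SimpleGraph.pathGraph n).lapMatrix ℝ + 1)⁻¹ := rfl
  rw [h, Matrix.inv_eq_right_inv (key n inst)]

theorem pathB_d_monotone (n : ℕ) :
    (∀ (i j : Fin n) (_ : i ≤ j) (h : (j : ℕ) + 1 < n),
      pathB n i j ≥ 2 * pathB n i ⟨(j : ℕ) + 1, h⟩) ∧
    (∀ (i j : Fin n) (_ : j ≤ i) (_ : 0 < (j : ℕ)),
      pathB n i j ≥ 2 * pathB n i ⟨(j : ℕ) - 1, by omega⟩) ∧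
    (∀ i j k : Fin n, j < k → k ≤ i → pathB n i j < pathB n i k) ∧
    (∀ i j k : Fin n, i ≤ j → j < k → pathB n i k < pathB n i j) := by
  refine ⟨?_, ?_, ?_, ?_⟩
  · intro i j hij h
    have hn : 0 < n := i.pos
    have hF : (0:ℝ) < Nat.fib (2*n) := by exact_mod_cast Nat.fib_pos.mpr (by omega)
    have hle : i.val ≤ j.val := hij
    rw [pathB_eq]
    simp only [pB, Matrix.of_apply]
    rw [show min i.val j.val = i.val by omega, show max i.val j.val = j.val by omega,
      show min i.val (j.val + 1) = i.val by omega,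
      show max i.val (j.val + 1) = j.val + 1 by omega]
    obtain ⟨e, he⟩ : ∃ e, n - 1 - j.val = e + 1 := ⟨n - 2 - j.val, by omega⟩
    rw [he, show n - 1 - (j.val + 1) = e by omega, show 2 * (e + 1) + 1 = 2*e+3 by ring]
    rw [ge_iff_le]
    apply half_le hF
    have hp := P1 e
    have hnn : (0:ℝ) ≤ Nat.fib (2 * i.val + 1) := by positivity
    nlinarith [hp, hnn]
  · intro i j hji h0
    have hn : 0 < n := i.pos
    have hF : (0:ℝ) < Nat.fib (2*n) := by exact_mod_cast Nat.fib_pos.mpr (by omega)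
    have hle : j.val ≤ i.val := hji
    rw [pathB_eq]
    simp only [pB, Matrix.of_apply]
    obtain ⟨s, hs⟩ : ∃ s, j.val = s + 1 := ⟨j.val - 1, by omega⟩
    rw [show min i.val j.val = s + 1 by omega, show max i.val j.val = i.val by omega,
      show min i.val (j.val - 1) = s by omega, show max i.val (j.val - 1) = i.val by omega,
      show 2 * (s + 1) + 1 = 2*s+3 by ring]
    rw [ge_iff_le]
    apply half_le hF
    have hp := P1 s
    have hnn : (0:ℝ) ≤ Nat.fib (2 * (n - 1 - i.val) + 1) := by positivity
    nlinarith [hp, hnn]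
  · intro i j k hjk hki
    have hn : 0 < n := i.pos
    have hF : (0:ℝ) < Nat.fib (2*n) := by exact_mod_cast Nat.fib_pos.mpr (by omega)
    have h1 : j.val < k.val := hjk
    have h2 : k.val ≤ i.val := hki
    rw [pathB_eq]
    simp only [pB, Matrix.of_apply]
    rw [show min i.val j.val = j.val by omega, show max i.val j.val = i.val by omega,
      show min i.val k.val = k.val by omega, show max i.val k.val = i.val by omega]
    have hV : (0:ℝ) < Nat.fib (2 * (n - 1 - i.val) + 1) := fibR_pos _
    exact (div_lt_div_iff_of_pos_right hF).mpr (mul_lt_mul_of_pos_right (P2 h1) hV)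
  · intro i j k hij hjk
    have hn : 0 < n := i.pos
    have hF : (0:ℝ) < Nat.fib (2*n) := by exact_mod_cast Nat.fib_pos.mpr (by omega)
    have h1 : i.val ≤ j.val := hij
    have h2 : j.val < k.val := hjk
    have h3 : k.val < n := k.isLt
    rw [pathB_eq]
    simp only [pB, Matrix.of_apply]
    rw [show min i.val j.val = i.val by omega, show max i.val j.val = j.val by omega,
      show min i.val k.val = i.val by omega, show max i.val k.val = k.val by omega]
    have hU : (0:ℝ) < Nat.fib (2 * i.val + 1) := fibR_pos _
    have hlt : (Nat.fib (2 * (n - 1 - k.val) + 1) : ℝ) < Nat.fib (2 * (n - 1 - j.val) + 1) :=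
      P2 (by omega)
    exact (div_lt_div_iff_of_pos_right hF).mpr (mul_lt_mul_of_pos_left hlt hU)
end

section
/- The modified path Laplacian \tilde{L}_{P_n} admits an LU factorization \tilde{L}_{P_n} = L_1 U where L_1 is unit lower bidiagonal with subdiagonal entries x_1 = -1/2 and x_i = -f_{2i-1}/f_{2i+1} for 2 \le i \le n-1, and U is upper bidiagonal with superdiagonal entries -1 and diagonal entries y_1 = 2, y_i = f_{2i+1}/f_{2i-1} for 2 \le i \le n-1, and y_n = f_{2n}/f_{2n-1}, where f_k denotes the k-th Fibonacci number. -/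
open SimpleGraph Finset

/-- The modified Laplacian of the path graph on `n` vertices. -/
noncomputable def pathLtilde (n : ℕ) : Matrix (Fin n) (Fin n) ℝ :=
  letI : DecidableRel (SimpleGraph.pathGraph n).Adj := Classical.decRel _
  (SimpleGraph.pathGraph n).lapMatrix ℝ + 1

/-- The unit lower bidiagonal factor `L₁`: subdiagonal entries
`x 1 = -1/2` and `x i = -f (2i-1) / f (2i+1)` (1-indexed). -/
noncomputable def pathL1 (n : ℕ) : Matrix (Fin n) (Fin n) ℝ := fun i j =>
  if i = j then 1
  else if i.1 = j.1 + 1 then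
    (if j.1 = 0 then -(1 / 2)
     else -((Nat.fib (2 * j.1 + 1) : ℝ) / (Nat.fib (2 * j.1 + 3))))
  else 0

/-- The upper bidiagonal factor `U`: superdiagonal entries `-1` and diagonal
entries `y 1 = 2`, `y i = f (2i+1) / f (2i-1)` for `2 ≤ i ≤ n-1`,
`y n = f (2n) / f (2n-1)` (1-indexed). -/
noncomputable def pathU (n : ℕ) : Matrix (Fin n) (Fin n) ℝ := fun i j =>
  if i = j then
    (if i.1 = 0 then 2
     else if i.1 = n - 1 then (Nat.fib (2 * n) : ℝ) / (Nat.fib (2 * n - 1))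
     else (Nat.fib (2 * i.1 + 3) : ℝ) / (Nat.fib (2 * i.1 + 1)))
  else if j.1 = i.1 + 1 then -1 else 0

lemma pathGraph_degree' {n : ℕ} (hn : 2 ≤ n) (v : Fin n)
    [DecidableRel (SimpleGraph.pathGraph n).Adj] :
    (pathGraph n).degree v = if v.1 = 0 ∨ v.1 = n - 1 then 1 else 2 := by
  classical
  rw [← SimpleGraph.card_neighborFinset_eq_degree]
  have hNF : (pathGraph n).neighborFinset v = Finset.univ.filter
      (fun w : Fin n => v.1 + 1 = w.1 ∨ w.1 + 1 = v.1) := by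
    ext w
    simp [SimpleGraph.mem_neighborFinset, pathGraph_adj]
  rw [hNF]
  rcases eq_or_ne v.1 0 with h0 | h0
  · have : Finset.univ.filter (fun w : Fin n => v.1 + 1 = w.1 ∨ w.1 + 1 = v.1)
        = {(⟨1, by omega⟩ : Fin n)} := by
      ext w; simp [Fin.ext_iff, h0]; omega
    rw [this]; simp [h0]
  · rcases eq_or_ne v.1 (n-1) with h1 | h1
    · have : Finset.univ.filter (fun w : Fin n => v.1 + 1 = w.1 ∨ w.1 + 1 = v.1)
          = {(⟨n-2, by omega⟩ : Fin n)} := by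
        ext w; simp [Fin.ext_iff, h1]; omega
      rw [this]; simp [h1]
    · have hlt : v.1 + 1 < n := by have := v.2; omega
      have : Finset.univ.filter (fun w : Fin n => v.1 + 1 = w.1 ∨ w.1 + 1 = v.1)
          = {(⟨v.1 - 1, by omega⟩ : Fin n), (⟨v.1 + 1, hlt⟩ : Fin n)} := by
        ext w; simp [Fin.ext_iff]; omega
      rw [this, Finset.card_insert_of_notMem (by simp [Fin.ext_iff])]
      simp [h0, h1]

lemma pathLtilde_apply {n : ℕ} (hn : 2 ≤ n) (i j : Fin n) :
    pathLtilde n i j = if i = j then (if i.1 = 0 ∨ i.1 = n - 1 then 2 else 3)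
      else if i.1 + 1 = j.1 ∨ j.1 + 1 = i.1 then -1 else 0 := by
  classical
  simp only [pathLtilde, Matrix.add_apply, SimpleGraph.lapMatrix, Matrix.sub_apply,
    SimpleGraph.degMatrix, Matrix.diagonal_apply, SimpleGraph.adjMatrix_apply,
    Matrix.one_apply, pathGraph_adj]
  rw [pathGraph_degree' hn i]
  rcases eq_or_ne i j with rfl | hij
  · simp; split <;> norm_num
  · have : ¬ (i.1 = j.1) := fun h => hij (Fin.ext h)
    simp [hij, this]
    split <;> simp

lemma mul_entry (n : ℕ) (i j : Fin n) :
    (pathL1 n * pathU n) i j = pathU n i j +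
      (if h : 0 < i.1 then
        (if i.1 - 1 = 0 then -(1/2)
         else -((Nat.fib (2 * (i.1-1) + 1) : ℝ) / (Nat.fib (2 * (i.1-1) + 3))))
          * pathU n ⟨i.1 - 1, by omega⟩ j
       else 0) := by
  rw [Matrix.mul_apply]
  have hsplit : ∀ k : Fin n, pathL1 n i k * pathU n k j =
      (if k = i then pathU n i j else 0) +
      (if i.1 = k.1 + 1 then
        (if k.1 = 0 then -(1/2)
         else -((Nat.fib (2 * k.1 + 1) : ℝ) / (Nat.fib (2 * k.1 + 3)))) * pathU n k j
       else 0) := by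
    intro k
    simp only [pathL1]
    rcases eq_or_ne i k with rfl | hik
    · simp
    · have : ¬ (k = i) := fun h => hik h.symm
      simp only [hik, if_neg this, if_false]
      by_cases h2 : i.1 = k.1 + 1
      · simp [h2]
      · simp [h2]
  rw [Finset.sum_congr rfl (fun k _ => hsplit k), Finset.sum_add_distrib]
  congr 1
  · simp
  · rcases Nat.eq_zero_or_pos i.1 with h0 | h0
    · rw [dif_neg (by omega)]
      apply Finset.sum_eq_zero
      intro k _
      rw [if_neg (by omega)]
    · rw [dif_pos h0]
      rw [Finset.sum_eq_single (⟨i.1 - 1, by omega⟩ : Fin n)]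
      · rw [if_pos (by simp; omega)]
      · intro k _ hk
        rw [if_neg (fun h => hk (Fin.ext (by simp; omega)))]
      · intro h; exact absurd (Finset.mem_univ _) h

lemma fib_id1 (k : ℕ) : Nat.fib (k+4) + Nat.fib k = 3 * Nat.fib (k+2) := by
  have h2 : Nat.fib (k+2) = Nat.fib k + Nat.fib (k+1) := Nat.fib_add_two
  have h3 : Nat.fib (k+3) = Nat.fib (k+1) + Nat.fib (k+2) := Nat.fib_add_two
  have h4 : Nat.fib (k+4) = Nat.fib (k+2) + Nat.fib (k+3) := Nat.fib_add_two
  omega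

lemma fib_id2 (k : ℕ) : Nat.fib (k+3) + Nat.fib k = 2 * Nat.fib (k+2) := by
  have h2 : Nat.fib (k+2) = Nat.fib k + Nat.fib (k+1) := Nat.fib_add_two
  have h3 : Nat.fib (k+3) = Nat.fib (k+1) + Nat.fib (k+2) := Nat.fib_add_two
  omega

lemma fib_pos_real (k : ℕ) : (0 : ℝ) < Nat.fib (k+1) := by
  exact_mod_cast Nat.fib_pos.2 (by omega)

lemma pathU_diag (n : ℕ) (i : Fin n) :
    pathU n i i = (if i.1 = 0 then 2
      else if i.1 = n - 1 then (Nat.fib (2 * n) : ℝ) / (Nat.fib (2 * n - 1))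
      else (Nat.fib (2 * i.1 + 3) : ℝ) / (Nat.fib (2 * i.1 + 1))) := by
  simp only [pathU, ite_true, eq_self_iff_true]

lemma pathU_off {n : ℕ} {i j : Fin n} (h : i ≠ j) :
    pathU n i j = if j.1 = i.1 + 1 then -1 else 0 := by
  simp only [pathU, if_neg h]

theorem pathLtilde_LU_factorization (n : ℕ) (hn : 2 ≤ n) :
    pathLtilde n = pathL1 n * pathU n := by
  ext i j
  rw [pathLtilde_apply hn, mul_entry]
  by_cases hd : i = j
  · subst hd
    rw [if_pos rfl, pathU_diag]
    rcases Nat.eq_zero_or_pos i.1 with h0 | h0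
    · rw [dif_neg (by omega), if_pos (Or.inl h0), if_pos h0]; ring
    · rw [dif_pos h0]
      have hUsub : pathU n ⟨i.1 - 1, by omega⟩ i = -1 := by
        rw [pathU_off (Fin.ne_of_val_ne (show i.1 - 1 ≠ i.1 by omega)),
          if_pos (show i.1 = i.1 - 1 + 1 by omega)]
      rw [hUsub, if_neg (show ¬ i.1 = 0 by omega)]
      by_cases h1 : i.1 = 1
      · rw [if_pos (show i.1 - 1 = 0 by omega)]
        by_cases hlast : i.1 = n - 1
        · have hn2 : n = 2 := by omega
          subst hn2
          rw [if_pos (show i.1 = 0 ∨ i.1 = 2 - 1 from Or.inr hlast), if_pos hlast]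
          have f4 : Nat.fib (2 * 2) = 3 := by decide
          have f3 : Nat.fib (2 * 2 - 1) = 2 := by decide
          rw [f4, f3]; norm_num
        · rw [if_neg (show ¬ (i.1 = 0 ∨ i.1 = n - 1) by omega), if_neg hlast, h1]
          have f5 : Nat.fib (2 * 1 + 3) = 5 := by decide
          have f3 : Nat.fib (2 * 1 + 1) = 2 := by decide
          rw [f5, f3]; norm_num
      · rw [if_neg (show ¬ i.1 - 1 = 0 by omega)]
        obtain ⟨m, hm⟩ : ∃ m, i.1 = m + 2 := ⟨i.1 - 2, by omega⟩
        rw [show 2 * (i.1 - 1) + 1 = 2 * m + 3 by omega,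
          show 2 * (i.1 - 1) + 3 = 2 * m + 5 by omega]
        have hp : (0 : ℝ) < Nat.fib (2*m+5) := fib_pos_real (2*m+4)
        by_cases hlast : i.1 = n - 1
        · have hnm : n = m + 3 := by omega
          rw [if_pos (Or.inr hlast), if_pos hlast, hnm,
            show 2 * (m + 3) = 2 * m + 6 by ring, show 2 * m + 6 - 1 = 2 * m + 5 by omega]
          have hid : (Nat.fib (2*m+6) : ℝ) + Nat.fib (2*m+3) = 2 * Nat.fib (2*m+5) := by
            exact_mod_cast fib_id2 (2*m+3)
          field_simp
          linarith
        · rw [if_neg (show ¬ (i.1 = 0 ∨ i.1 = n - 1) by omega), if_neg hlast,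
            show 2 * i.1 + 3 = 2 * m + 7 by omega, show 2 * i.1 + 1 = 2 * m + 5 by omega]
          have hid : (Nat.fib (2*m+7) : ℝ) + Nat.fib (2*m+3) = 3 * Nat.fib (2*m+5) := by
            exact_mod_cast fib_id1 (2*m+3)
          field_simp
          linarith
  · rw [if_neg hd, pathU_off hd]
    by_cases hsup : j.1 = i.1 + 1
    · rw [if_pos (Or.inl hsup.symm), if_pos hsup]
      rcases Nat.eq_zero_or_pos i.1 with h0 | h0
      · rw [dif_neg (by omega)]; ring
      · rw [dif_pos h0]
        have hU2 : pathU n ⟨i.1 - 1, by omega⟩ j = 0 := by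
          rw [pathU_off (Fin.ne_of_val_ne (show i.1 - 1 ≠ j.1 by omega)),
            if_neg (show ¬ (j.1 = i.1 - 1 + 1) by omega)]
        rw [hU2]; ring
    · rw [if_neg hsup]
      by_cases hsub : j.1 + 1 = i.1
      · rw [if_pos (Or.inr hsub), dif_pos (show 0 < i.1 by omega)]
        have hfj : (⟨i.1 - 1, by omega⟩ : Fin n) = j :=
          Fin.ext (show i.1 - 1 = j.1 by omega)
        have hjlast : ¬ j.1 = n - 1 := by have := i.2; omega
        rw [hfj, pathU_diag]
        by_cases hj0 : j.1 = 0
        · rw [if_pos (show i.1 - 1 = 0 by omega), if_pos hj0]; norm_num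
        · rw [if_neg (show ¬ i.1 - 1 = 0 by omega), if_neg hj0, if_neg hjlast,
            show 2 * (i.1 - 1) + 1 = 2 * j.1 + 1 by omega,
            show 2 * (i.1 - 1) + 3 = 2 * j.1 + 3 by omega]
          have hp1 : (0 : ℝ) < Nat.fib (2*j.1+1) := fib_pos_real (2*j.1)
          have hp3 : (0 : ℝ) < Nat.fib (2*j.1+3) := fib_pos_real (2*j.1+2)
          field_simp; ring
      · rw [if_neg (show ¬ (i.1 + 1 = j.1 ∨ j.1 + 1 = i.1) by omega)]
        rcases Nat.eq_zero_or_pos i.1 with h0 | h0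
        · rw [dif_neg (by omega)]; ring
        · rw [dif_pos h0]
          have hij' : j.1 ≠ i.1 := fun h => hd (Fin.ext h.symm) |>.elim
          have hU2 : pathU n ⟨i.1 - 1, by omega⟩ j = 0 := by
            rw [pathU_off (Fin.ne_of_val_ne (show i.1 - 1 ≠ j.1 by omega)),
              if_neg (show ¬ (j.1 = i.1 - 1 + 1) by omega)]
          rw [hU2]; ring
end

section
/- Suppose the graph G has a pendant vertex j (degree 1) adjacent to vertex k. Then the inverse B_G = [b_{ij}] of L_G + I satisfies b_{ik} = 2 b_{ij} for every i \ne j. -/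
theorem pendant_vertex_entries
    {n : ℕ} (G : SimpleGraph (Fin n)) [DecidableRel G.Adj]
    (B : Matrix (Fin n) (Fin n) ℝ) (hB : B = (G.lapMatrix ℝ + 1)⁻¹)
    (j k : Fin n) (hdeg : G.degree j = 1) (hadj : G.Adj j k) :
    ∀ i : Fin n, i ≠ j → B i k = 2 * B i j := by
  intro i hij
  set M : Matrix (Fin n) (Fin n) ℝ := G.lapMatrix ℝ + 1 with hM
  have hpd : M.PosDef := Matrix.PosDef.posSemidef_add (SimpleGraph.posSemidef_lapMatrix ℝ G) Matrix.PosDef.one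
  have hBM : B * M = 1 := by
    rw [hB]; exact Matrix.nonsing_inv_mul M (isUnit_iff_ne_zero.mpr hpd.det_pos.ne')
  have hjk : j ≠ k := hadj.ne
  -- only neighbor of j is k
  have hnb : ∀ m, G.Adj m j → m = k := by
    intro m hm
    have hc : (G.neighborFinset j).card = 1 := hdeg
    obtain ⟨a, ha⟩ := Finset.card_eq_one.mp hc
    have h1 : m ∈ G.neighborFinset j := by rw [SimpleGraph.mem_neighborFinset]; exact hm.symm
    have h2 : k ∈ G.neighborFinset j := by rw [SimpleGraph.mem_neighborFinset]; exact hadj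
    rw [ha, Finset.mem_singleton] at h1 h2
    rw [h1, h2]
  have hMjj : M j j = 2 := by
    simp [hM, SimpleGraph.lapMatrix, SimpleGraph.degMatrix, Matrix.one_apply, hdeg]
    norm_num
  have hMkj : M k j = -1 := by
    simp [hM, SimpleGraph.lapMatrix, SimpleGraph.degMatrix, Matrix.one_apply, hjk.symm,
      hadj.symm]
  have hMzero : ∀ m, m ≠ j → m ≠ k → M m j = 0 := by
    intro m hmj hmk
    have : ¬ G.Adj m j := fun h => hmk (hnb m h)
    simp [hM, SimpleGraph.lapMatrix, SimpleGraph.degMatrix, Matrix.one_apply, hmj, this]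
  have key : (B * M) i j = 0 := by rw [hBM, Matrix.one_apply_ne hij]
  rw [Matrix.mul_apply] at key
  have hsum : ∑ m, B i m * M m j = ∑ m ∈ ({j, k} : Finset (Fin n)), B i m * M m j := by
    refine (Finset.sum_subset (Finset.subset_univ _) ?_).symm
    intro m _ hm
    simp only [Finset.mem_insert, Finset.mem_singleton, not_or] at hm
    rw [hMzero m hm.1 hm.2, mul_zero]
  rw [hsum, Finset.sum_pair hjk, hMjj, hMkj] at key
  linarith
end

section
/- Let T be a tree, B_T = [b_{ij}] = (L_T + I)^{-1}, and fix a vertex v_i. If P = v_{i_0}, v_{i_1}, ..., v_{i_k} is a path in T with i_0 = i and v_{i_k} a pendant vertex, then b_{i, i_t} \ge 2 b_{i, i_{t+1}} for all 0 \le t \le k-1. -/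
open Finset SimpleGraph Matrix in
lemma tpm_posdef {n : ℕ} (T : SimpleGraph (Fin n)) [DecidableRel T.Adj] :
    (T.lapMatrix ℝ + 1).PosDef :=
  Matrix.PosDef.posSemidef_add (posSemidef_lapMatrix ℝ T) Matrix.PosDef.one

open Finset SimpleGraph Matrix in
lemma tpm_eqn {n : ℕ} (T : SimpleGraph (Fin n)) [DecidableRel T.Adj]
    (B : Matrix (Fin n) (Fin n) ℝ) (hB : B = (T.lapMatrix ℝ + 1)⁻¹)
    (i j : Fin n) :
    B i j * (1 + T.degree j) =
      (if i = j then (1:ℝ) else 0) + ∑ u ∈ T.neighborFinset j, B i u := by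
  have hM := tpm_posdef T
  have h1 : B * (T.lapMatrix ℝ + 1) = 1 := by
    rw [hB]
    exact Matrix.nonsing_inv_mul _ ((Matrix.isUnit_iff_isUnit_det _).mp hM.isUnit)
  have hsymm : ∀ a b : Fin n, (T.lapMatrix ℝ + 1) a b = (T.lapMatrix ℝ + 1) b a := by
    intro a b
    have h := (T.isSymm_lapMatrix (R := ℝ)).add (Matrix.isSymm_one (n := Fin n))
    calc (T.lapMatrix ℝ + 1) a b = (T.lapMatrix ℝ + 1)ᵀ b a := (Matrix.transpose_apply _ _ _).symm
      _ = (T.lapMatrix ℝ + 1) b a := by rw [h]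
  have h2 : ((T.lapMatrix ℝ + 1) *ᵥ (fun u => B i u)) j = (if i = j then (1:ℝ) else 0) := by
    have h3 := congrFun (congrFun h1 i) j
    rw [Matrix.mul_apply] at h3
    rw [Matrix.mulVec, dotProduct]
    rw [← Matrix.one_apply (i := i) (j := j), ← h3]
    exact Finset.sum_congr rfl (fun u _ => by rw [hsymm, mul_comm])
  rw [Matrix.add_mulVec, Matrix.one_mulVec, Pi.add_apply,
    SimpleGraph.lapMatrix_mulVec_apply] at h2
  rw [← h2]; ring

open Finset SimpleGraph Matrix in
lemma tpm_nonneg {n : ℕ} (T : SimpleGraph (Fin n)) [DecidableRel T.Adj]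
    (B : Matrix (Fin n) (Fin n) ℝ) (hB : B = (T.lapMatrix ℝ + 1)⁻¹)
    (i : Fin n) : ∀ j, 0 ≤ B i j := by
  obtain ⟨j0, -, hmin⟩ := Finset.exists_min_image Finset.univ (fun j => B i j)
    ⟨i, Finset.mem_univ i⟩
  have key : 0 ≤ B i j0 := by
    have h := tpm_eqn T B hB i j0
    have h1 : (T.degree j0 : ℝ) * B i j0 ≤ ∑ u ∈ T.neighborFinset j0, B i u := by
      calc (T.degree j0 : ℝ) * B i j0
          = ∑ _u ∈ T.neighborFinset j0, B i j0 := by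
            rw [Finset.sum_const, T.card_neighborFinset_eq_degree, nsmul_eq_mul]
        _ ≤ ∑ u ∈ T.neighborFinset j0, B i u :=
            Finset.sum_le_sum (fun u _ => hmin u (Finset.mem_univ u))
    have h2 : (0:ℝ) ≤ if i = j0 then (1:ℝ) else 0 := by positivity
    nlinarith [h1, h2, h]
  intro j; exact key.trans (hmin j (Finset.mem_univ j))

open Finset SimpleGraph Matrix in
lemma tpm_cut {n : ℕ} (T : SimpleGraph (Fin n)) [DecidableRel T.Adj]
    (B : Matrix (Fin n) (Fin n) ℝ) (hB : B = (T.lapMatrix ℝ + 1)⁻¹)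
    (i u v : Fin n) (huv : T.Adj u v) (S : Finset (Fin n))
    (hv : v ∈ S) (hu : u ∉ S) (hiS : i ∉ S)
    (hbd : ∀ j ∈ S, ∀ z ∉ S, T.Adj j z → j = v ∧ z = u) :
    B i u = B i v + ∑ j ∈ S, B i j := by
  classical
  set x : Fin n → ℝ := fun j => B i j with hx
  set F : Fin n → Fin n → ℝ := fun j z => if T.Adj j z then x j - x z else 0 with hF
  have hnb : ∀ j : Fin n, ∑ z ∈ T.neighborFinset j, x z
      = ∑ z : Fin n, (if T.Adj j z then x z else 0) := by
    intro j
    rw [SimpleGraph.neighborFinset_eq_filter, Finset.sum_filter]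
  have hdeg : ∀ j : Fin n, (T.degree j : ℝ) = ∑ z : Fin n, (if T.Adj j z then (1:ℝ) else 0) := by
    intro j
    rw [← T.card_neighborFinset_eq_degree, SimpleGraph.neighborFinset_eq_filter]
    rw [Finset.card_eq_sum_ones, Nat.cast_sum, ← Finset.sum_filter]
    simp
  -- per-vertex identity inside S
  have per : ∀ j ∈ S, x j + ∑ z : Fin n, F j z = 0 := by
    intro j hj
    have heq := tpm_eqn T B hB i j
    have hδ : (if i = j then (1:ℝ) else 0) = 0 := by
      rw [if_neg]; rintro rfl; exact hiS hj
    have hstep : ∀ z : Fin n,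
        x j * (if T.Adj j z then (1:ℝ) else 0) - (if T.Adj j z then x z else 0) = F j z := by
      intro z; by_cases h : T.Adj j z <;> simp [hF, h]
    have hexp : x j * (1 + T.degree j) - ∑ z ∈ T.neighborFinset j, x z
        = x j + ∑ z : Fin n, F j z := by
      rw [hnb j, mul_add, mul_one, hdeg j, Finset.mul_sum, add_sub_assoc,
        ← Finset.sum_sub_distrib]
      congr 1
      exact Finset.sum_congr rfl fun z _ => hstep z
    rw [← hexp, heq, hδ, zero_add, sub_self]
  have hmain : ∑ j ∈ S, x j + ∑ j ∈ S, ∑ z : Fin n, F j z = 0 := by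
    rw [← Finset.sum_add_distrib]
    exact Finset.sum_eq_zero per
  -- split inner sum into S and Sᶜ
  have hsplit : ∀ j : Fin n, ∑ z : Fin n, F j z = ∑ z ∈ S, F j z + ∑ z ∈ Sᶜ, F j z :=
    fun j => (Finset.sum_add_sum_compl S (F j)).symm
  -- antisymmetric part vanishes
  have hanti : ∑ j ∈ S, ∑ z ∈ S, F j z = 0 := by
    have hFanti : ∀ j z : Fin n, F j z = -F z j := by
      intro j z
      by_cases h : T.Adj j z
      · simp only [hF, if_pos h, if_pos h.symm]; ring
      · have h2 : ¬ T.Adj z j := fun h' => h h'.symm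
        simp [hF, h, h2]
    have h1 : ∑ j ∈ S, ∑ z ∈ S, F j z = -∑ j ∈ S, ∑ z ∈ S, F j z := by
      nth_rewrite 1 [Finset.sum_comm]
      rw [← Finset.sum_neg_distrib]
      apply Finset.sum_congr rfl; intro z _
      rw [← Finset.sum_neg_distrib]
      exact Finset.sum_congr rfl fun j _ => hFanti j z
    linarith
  -- boundary part
  have hbdry : ∑ j ∈ S, ∑ z ∈ Sᶜ, F j z = x v - x u := by
    have step : ∀ j ∈ S, ∑ z ∈ Sᶜ, F j z = if j = v then x v - x u else 0 := by
      intro j hj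
      by_cases hjv : j = v
      · subst hjv
        rw [if_pos rfl]
        have hsum : ∑ z ∈ Sᶜ, F j z = F j u := by
          apply Finset.sum_eq_single_of_mem u (Finset.mem_compl.mpr hu)
          intro z hz hzu
          have hzS : z ∉ S := Finset.mem_compl.mp hz
          by_cases h : T.Adj j z
          · exact absurd ((hbd j hj z hzS h).2) hzu
          · simp [hF, h]
        rw [hsum]
        simp [hF, huv.symm]
      · rw [if_neg hjv]
        apply Finset.sum_eq_zero
        intro z hz
        have hzS : z ∉ S := Finset.mem_compl.mp hz
        by_cases h : T.Adj j z
        · exact absurd ((hbd j hj z hzS h).1) hjv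
        · simp [hF, h]
      
    rw [Finset.sum_congr rfl step, Finset.sum_ite_eq' S v (fun _ => x v - x u), if_pos hv]
  have : ∑ j ∈ S, x j + (∑ j ∈ S, ∑ z ∈ S, F j z + ∑ j ∈ S, ∑ z ∈ Sᶜ, F j z) = 0 := by
    rw [← Finset.sum_add_distrib]
    rw [← hmain]
    congr 1
    exact Finset.sum_congr rfl fun j _ => (hsplit j).symm
  rw [hanti, zero_add, hbdry] at this
  have : x u = x v + ∑ j ∈ S, x j := by linarith
  exact this

open Finset SimpleGraph Matrix in
theorem tree_path_monotone
    {n : ℕ} (T : SimpleGraph (Fin n)) [DecidableRel T.Adj] (hT : T.IsTree)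
    (B : Matrix (Fin n) (Fin n) ℝ) (hB : B = (T.lapMatrix ℝ + 1)⁻¹)
    (i : Fin n) (k : ℕ) (w : ℕ → Fin n)
    (hw0 : w 0 = i)
    (hadj : ∀ t < k, T.Adj (w t) (w (t + 1)))
    (hinj : ∀ s ≤ k, ∀ t ≤ k, w s = w t → s = t)
    (hpend : T.degree (w k) = 1) :
    ∀ t < k, B i (w t) ≥ 2 * B i (w (t + 1)) := by
  classical
  intro t ht
  set u := w t with hu'
  set v := w (t + 1) with hv'
  have huv : T.Adj u v := hadj t ht
  set G' := T \ SimpleGraph.fromEdgeSet {s(u, v)} with hG'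
  have hG'adj : ∀ a b : Fin n, T.Adj a b → s(a, b) ≠ s(u, v) → G'.Adj a b := by
    intro a b hab hne
    rw [hG', SimpleGraph.sdiff_adj]
    refine ⟨hab, fun hcon => ?_⟩
    rw [SimpleGraph.fromEdgeSet_adj] at hcon
    exact hne (by simpa using hcon.1)
  have hbr : ¬ G'.Reachable u v := by
    have h := (SimpleGraph.isAcyclic_iff_forall_edge_isBridge.mp hT.IsAcyclic)
      (e := s(u, v)) (T.mem_edgeSet.mpr huv)
    exact SimpleGraph.isBridge_iff.mp h
  set S : Finset (Fin n) := Finset.univ.filter (fun z => G'.Reachable v z) with hS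
  have hmemS : ∀ z, z ∈ S ↔ G'.Reachable v z := by
    intro z; simp [hS]
  have hvS : v ∈ S := (hmemS v).mpr (SimpleGraph.Reachable.refl v)
  have huS : u ∉ S := fun h => hbr ((hmemS u).mp h).symm
  -- the prefix path stays on u's side
  have hkey : ∀ s, s ≤ t → G'.Reachable (w 0) (w s) := by
    intro s
    induction s with
    | zero => intro _; exact SimpleGraph.Reachable.refl _
    | succ m ih =>
      intro hm
      refine (ih (by omega)).trans (SimpleGraph.Adj.reachable ?_)
      have hadjm : T.Adj (w m) (w (m + 1)) := hadj m (by omega)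
      refine hG'adj _ _ hadjm ?_
      intro he
      rw [Sym2.eq_iff] at he
      rcases he with ⟨h1, _⟩ | ⟨h1, _⟩
      · have := hinj m (by omega) t (by omega) h1; omega
      · have := hinj m (by omega) (t + 1) (by omega) h1; omega
  have hiu : G'.Reachable i u := hw0 ▸ hkey t le_rfl
  have hiS : i ∉ S := fun h => hbr (((hmemS i).mp h).trans hiu).symm
  have hbd : ∀ j ∈ S, ∀ z ∉ S, T.Adj j z → j = v ∧ z = u := by
    intro j hj z hz hjz
    by_cases he : s(j, z) = s(u, v)
    · rw [Sym2.eq_iff] at he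
      rcases he with ⟨h1, h2⟩ | ⟨h1, h2⟩
      · exact absurd (h1 ▸ hj) huS
      · exact ⟨h1, h2⟩
    · exact absurd ((hmemS z).mpr (((hmemS j).mp hj).trans
        (SimpleGraph.Adj.reachable (hG'adj j z hjz he)))) hz
  have hcut := tpm_cut T B hB i u v huv S hvS huS hiS hbd
  have hnn := tpm_nonneg T B hB i
  have hsum : B i v ≤ ∑ j ∈ S, B i j :=
    Finset.single_le_sum (fun j _ => hnn j) hvS
  show B i u ≥ 2 * B i v
  linarith
end

section
/- Let T be a tree on n vertices and B_T = [b_{ij}] = (L_T + I)^{-1}. Then for every vertex v_i, b_{ii} \ge 1 / (\sum_j 2^{-d(v_i, v_j)}), where d is the graph distance in T. -/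
open Matrix

/-- In a tree, a vertex `u` has at most one neighbor strictly closer to `i`. -/
lemma tree_closer_neighbor_unique {n : ℕ} {T : SimpleGraph (Fin n)} (hT : T.IsTree)
    {i u v w : Fin n} (hv : T.Adj u v) (hw : T.Adj u w)
    (hdv : T.dist i v < T.dist i u) (hdw : T.dist i w < T.dist i u) : v = w := by
  have hconn := hT.isConnected
  have h1 : T.dist i u = T.dist i v + 1 := by
    have := hconn.dist_triangle (u := i) (v := v) (w := u)
    rw [SimpleGraph.dist_eq_one_iff_adj.mpr hv.symm] at this
    omega
  have h2 : T.dist i u = T.dist i w + 1 := by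
    have := hconn.dist_triangle (u := i) (v := w) (w := u)
    rw [SimpleGraph.dist_eq_one_iff_adj.mpr hw.symm] at this
    omega
  obtain ⟨p, hp, hpl⟩ := hconn.exists_path_of_dist v i
  obtain ⟨q, hq, hql⟩ := hconn.exists_path_of_dist w i
  have hPv : (SimpleGraph.Walk.cons hv p).IsPath := by
    apply SimpleGraph.Walk.isPath_of_length_eq_dist
    rw [SimpleGraph.Walk.length_cons, hpl, SimpleGraph.dist_comm (u := v),
      SimpleGraph.dist_comm (u := u), h1]
  have hPw : (SimpleGraph.Walk.cons hw q).IsPath := by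
    apply SimpleGraph.Walk.isPath_of_length_eq_dist
    rw [SimpleGraph.Walk.length_cons, hql, SimpleGraph.dist_comm (u := w),
      SimpleGraph.dist_comm (u := u), h2]
  obtain ⟨r, _, hun⟩ := hT.existsUnique_path u i
  have heq : SimpleGraph.Walk.cons hv p = SimpleGraph.Walk.cons hw q :=
    (hun _ hPv).trans (hun _ hPw).symm
  have := congrArg (fun z => z.getVert 1) heq
  simpa using this

theorem tree_diagonal_lower_bound
    {n : ℕ} (T : SimpleGraph (Fin n)) [DecidableRel T.Adj] (hT : T.IsTree)
    (B : Matrix (Fin n) (Fin n) ℝ) (hB : B = (T.lapMatrix ℝ + 1)⁻¹)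
    (i : Fin n) :
    B i i ≥ 1 / ∑ j, (2 : ℝ) ^ (-(T.dist i j : ℤ)) := by
  classical
  set M : Matrix (Fin n) (Fin n) ℝ := T.lapMatrix ℝ + 1 with hMdef
  have hMpd : M.PosDef :=
    Matrix.PosDef.posSemidef_add (SimpleGraph.posSemidef_lapMatrix ℝ T) Matrix.PosDef.one
  set x : Fin n → ℝ := fun j => (2 : ℝ) ^ (-(T.dist i j : ℤ)) with hxdef
  have hxi : x i = 1 := by simp [hxdef, SimpleGraph.dist_self]
  have hxpos : ∀ j, 0 < x j := fun j => by positivity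
  set S : ℝ := x ⬝ᵥ (M *ᵥ x) with hSdef
  have hxne : x ≠ 0 := fun h => by
    have := congrFun h i
    rw [hxi] at this; simp at this
  have hSpos : 0 < S := by
    have := hMpd.dotProduct_mulVec_pos hxne
    simpa using this
  -- The quadratic-form bound : S ≤ ∑ 2^{-d}
  have hLquad : x ⬝ᵥ (T.lapMatrix ℝ *ᵥ x) =
      (∑ u, ∑ v, if T.Adj u v then (x u - x v)^2 else 0)/2 := by
    rw [← Matrix.toLinearMap₂'_apply', SimpleGraph.lapMatrix_toLinearMap₂']
  -- termwise bound on edges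
  have hterm : ∀ u v : Fin n, (if T.Adj u v then (x u - x v)^2 else 0) ≤
      (if T.Adj u v ∧ T.dist i v < T.dist i u then (x u)^2 else 0) +
      (if T.Adj u v ∧ T.dist i u < T.dist i v then (x v)^2 else 0) := by
    intro u v
    by_cases h : T.Adj u v
    · have huv : T.dist u v = 1 := SimpleGraph.dist_eq_one_iff_adj.mpr h
      have t1 : T.dist i v ≤ T.dist i u + 1 := by
        have := hT.isConnected.dist_triangle (u := i) (v := u) (w := v)
        omega
      have t2 : T.dist i u ≤ T.dist i v + 1 := by
        have := hT.isConnected.dist_triangle (u := i) (v := v) (w := u)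
        rw [SimpleGraph.dist_comm (u := v) (v := u)] at this
        omega
      rcases lt_trichotomy (T.dist i v) (T.dist i u) with hc | hc | hc
      · have hdu : (T.dist i u : ℤ) = (T.dist i v : ℤ) + 1 := by exact_mod_cast by omega
        have h2 : ¬ T.dist i u < T.dist i v := by omega
        have hxuv : x u = x v * 2⁻¹ := by
          show (2:ℝ) ^ (-(T.dist i u : ℤ)) = (2:ℝ) ^ (-(T.dist i v : ℤ)) * 2⁻¹
          rw [hdu, neg_add, zpow_add₀ (two_ne_zero : (2:ℝ) ≠ 0)]
          norm_num
        simp only [h, hc, true_and, if_true, h2, if_false, add_zero]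
        rw [hxuv]
        exact le_of_eq (by ring)
      · have hxeq : x u = x v := by
          show (2:ℝ) ^ (-(T.dist i u : ℤ)) = (2:ℝ) ^ (-(T.dist i v : ℤ))
          rw [hc]
        rw [if_pos h]
        calc (x u - x v)^2 = 0 := by rw [hxeq]; ring
          _ ≤ _ := by split_ifs <;> nlinarith [sq_nonneg (x u), sq_nonneg (x v)]
      · have hdv : (T.dist i v : ℤ) = (T.dist i u : ℤ) + 1 := by exact_mod_cast by omega
        have h2 : ¬ T.dist i v < T.dist i u := by omega
        have hxuv : x v = x u * 2⁻¹ := by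
          show (2:ℝ) ^ (-(T.dist i v : ℤ)) = (2:ℝ) ^ (-(T.dist i u : ℤ)) * 2⁻¹
          rw [hdv, neg_add, zpow_add₀ (two_ne_zero : (2:ℝ) ≠ 0)]
          norm_num
        simp only [h, hc, true_and, if_true, h2, if_false, zero_add]
        rw [hxuv]
        exact le_of_eq (by ring)
    · rw [if_neg h]
      split_ifs <;> nlinarith [sq_nonneg (x u), sq_nonneg (x v)]
  -- the second double sum equals the first (by symmetry)
  have hswap : ∑ u, ∑ v, (if T.Adj u v ∧ T.dist i u < T.dist i v then (x v)^2 else 0)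
      = ∑ u, ∑ v, (if T.Adj u v ∧ T.dist i v < T.dist i u then (x u)^2 else 0) := by
    rw [Finset.sum_comm]
    apply Finset.sum_congr rfl; intro u _
    apply Finset.sum_congr rfl; intro v _
    congr 1
    rw [eq_iff_iff]
    constructor
    · rintro ⟨ha, hd⟩; exact ⟨ha.symm, hd⟩
    · rintro ⟨ha, hd⟩; exact ⟨ha.symm, hd⟩
  -- inner-sum bound via uniqueness of closer neighbor
  have hinner : ∀ u : Fin n,
      (∑ v, if T.Adj u v ∧ T.dist i v < T.dist i u then (x u)^2 else 0)
        ≤ if u = i then 0 else (x u)^2 := by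
    intro u
    by_cases hu : u = i
    · subst hu
      simp only [if_pos rfl]
      have : ∀ v : Fin n, ¬ (T.Adj u v ∧ T.dist u v < T.dist u u) := by
        intro v ⟨_, hd⟩
        rw [SimpleGraph.dist_self] at hd; omega
      rw [Finset.sum_eq_zero (fun v _ => if_neg (this v))]
      simp
    · rw [if_neg hu]
      rw [← Finset.sum_filter]
      have hcard : (Finset.univ.filter
          (fun v => T.Adj u v ∧ T.dist i v < T.dist i u)).card ≤ 1 := by
        apply Finset.card_le_one.mpr
        intro a ha b hb
        simp only [Finset.mem_filter] at ha hb
        exact tree_closer_neighbor_unique hT ha.2.1 hb.2.1 ha.2.2 hb.2.2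
      rw [Finset.sum_const, nsmul_eq_mul]
      calc ((Finset.univ.filter _).card : ℝ) * (x u)^2
          ≤ 1 * (x u)^2 := by
            apply mul_le_mul_of_nonneg_right _ (sq_nonneg _)
            exact_mod_cast hcard
        _ = (x u)^2 := one_mul _
  have hSle : S ≤ ∑ j, (2 : ℝ) ^ (-(T.dist i j : ℤ)) := by
    have hxx : x ⬝ᵥ x = ∑ u, (x u)^2 := by
      simp [dotProduct, sq]
    have hMx : S = x ⬝ᵥ (T.lapMatrix ℝ *ᵥ x) + x ⬝ᵥ x := by
      rw [hSdef, hMdef, Matrix.add_mulVec, Matrix.one_mulVec, dotProduct_add]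
    have hL : x ⬝ᵥ (T.lapMatrix ℝ *ᵥ x) ≤
        ∑ u, (if u = i then 0 else (x u)^2) := by
      rw [hLquad]
      have step1 : (∑ u, ∑ v, if T.Adj u v then (x u - x v)^2 else 0) ≤
          2 * ∑ u, ∑ v, (if T.Adj u v ∧ T.dist i v < T.dist i u then (x u)^2 else 0) := by
        calc (∑ u, ∑ v, if T.Adj u v then (x u - x v)^2 else 0)
            ≤ ∑ u, ∑ v, ((if T.Adj u v ∧ T.dist i v < T.dist i u then (x u)^2 else 0) +
              (if T.Adj u v ∧ T.dist i u < T.dist i v then (x v)^2 else 0)) := by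
              apply Finset.sum_le_sum; intro u _
              apply Finset.sum_le_sum; intro v _
              exact hterm u v
          _ = (∑ u, ∑ v, (if T.Adj u v ∧ T.dist i v < T.dist i u then (x u)^2 else 0)) +
              ∑ u, ∑ v, (if T.Adj u v ∧ T.dist i u < T.dist i v then (x v)^2 else 0) := by
              rw [← Finset.sum_add_distrib]
              apply Finset.sum_congr rfl; intro u _
              rw [← Finset.sum_add_distrib]
          _ = 2 * ∑ u, ∑ v, (if T.Adj u v ∧ T.dist i v < T.dist i u then (x u)^2 else 0) := by
              rw [hswap]; ring
      have step2 : (∑ u, ∑ v, (if T.Adj u v ∧ T.dist i v < T.dist i u then (x u)^2 else 0)) ≤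
          ∑ u, (if u = i then 0 else (x u)^2) :=
        Finset.sum_le_sum (fun u _ => hinner u)
      linarith
    rw [hMx, hxx]
    have : (∑ u, (if u = i then 0 else (x u)^2)) + ∑ u, (x u)^2 =
        ∑ u, ((if u = i then 0 else (x u)^2) + (x u)^2) := by
      rw [← Finset.sum_add_distrib]
    have key : ∀ u : Fin n, (if u = i then 0 else (x u)^2) + (x u)^2 ≤ x u := by
      intro u
      by_cases hu : u = i
      · subst hu; rw [if_pos rfl, hxi]; norm_num
      · rw [if_neg hu]
        have hd : 1 ≤ T.dist i u := hT.isConnected.pos_dist_of_ne (fun h => hu h.symm)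
        have : (x u)^2 + (x u)^2 = (2:ℝ) ^ (1 + (-(T.dist i u : ℤ)) + (-(T.dist i u : ℤ))) := by
          rw [hxdef]; simp only []
          rw [zpow_add₀ (two_ne_zero : (2:ℝ) ≠ 0), zpow_add₀ (two_ne_zero : (2:ℝ) ≠ 0)]
          ring
        rw [this, hxdef]
        apply zpow_le_zpow_right₀ one_le_two
        omega
    calc x ⬝ᵥ (T.lapMatrix ℝ *ᵥ x) + ∑ u, (x u)^2
        ≤ (∑ u, (if u = i then 0 else (x u)^2)) + ∑ u, (x u)^2 := by linarith
      _ = ∑ u, ((if u = i then 0 else (x u)^2) + (x u)^2) := this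
      _ ≤ ∑ u, x u := Finset.sum_le_sum (fun u _ => key u)
  -- linear algebra: B i i ≥ 1 / S
  have hdet : IsUnit M.det := hMpd.det_pos.ne'.isUnit
  have hMB : M * B = 1 := by rw [hB]; exact Matrix.mul_nonsing_inv _ hdet
  have hMsymm : Mᵀ = M := by
    rw [hMdef, Matrix.transpose_add, Matrix.transpose_one]
    congr 1
    exact T.isSymm_lapMatrix (R := ℝ)
  set w : Fin n → ℝ := B *ᵥ Pi.single i 1 with hwdef
  have hMw : M *ᵥ w = Pi.single i 1 := by
    rw [hwdef, Matrix.mulVec_mulVec, hMB, Matrix.one_mulVec]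
  have hxMw : x ⬝ᵥ (M *ᵥ w) = 1 := by
    rw [hMw, dotProduct_single, hxi, mul_one]
  have hwMx : w ⬝ᵥ (M *ᵥ x) = 1 := by
    rw [Matrix.dotProduct_mulVec, ← hMsymm, Matrix.vecMul_transpose, hMw,
      single_dotProduct, one_mul, hxi]
  have hwMw : w ⬝ᵥ (M *ᵥ w) = B i i := by
    rw [hMw, dotProduct_single, mul_one, hwdef]
    simp [Matrix.mulVec_single]
  have hkey : 0 ≤ (x - S • w) ⬝ᵥ (M *ᵥ (x - S • w)) := by
    have := hMpd.posSemidef.dotProduct_mulVec_nonneg (x - S • w)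
    simpa using this
  have hexp : (x - S • w) ⬝ᵥ (M *ᵥ (x - S • w)) = S * S * B i i - S := by
    rw [Matrix.mulVec_sub, Matrix.mulVec_smul, sub_dotProduct,
      smul_dotProduct, dotProduct_sub, dotProduct_sub,
      dotProduct_smul, dotProduct_smul, hxMw, hwMx, hwMw, ← hSdef]
    simp only [smul_eq_mul]
    ring
  rw [hexp] at hkey
  have hBii : 1 / S ≤ B i i := by
    rw [div_le_iff₀ hSpos]
    nlinarith
  have hsum_pos : 0 < ∑ j, (2 : ℝ) ^ (-(T.dist i j : ℤ)) := lt_of_lt_of_le hSpos hSle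
  have : 1 / ∑ j, (2 : ℝ) ^ (-(T.dist i j : ℤ)) ≤ 1 / S :=
    one_div_le_one_div_of_le hSpos hSle
  linarith
end

section
/- Let T be a tree, B_T = [b_{ij}] = (L_T + I)^{-1}, and i a vertex. Then b_{ii} \ge 2^{d(v_i, v_j)} b_{ij} for every vertex v_j, where d denotes graph distance in T. -/
open SimpleGraph Matrix Finset

section Helpers

variable {V : Type*} [DecidableEq V] {G : SimpleGraph V}

/-- In a tree, every path between two vertices has length the distance. -/
lemma tdd_path_len (hT : G.IsTree) {a b : V} (p : G.Walk a b) (hp : p.IsPath) :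
    p.length = G.dist a b := by
  obtain ⟨q, hq, hql⟩ := hT.isConnected.exists_path_of_dist a b
  have : (⟨p, hp⟩ : G.Path a b) = ⟨q, hq⟩ := hT.IsAcyclic.path_unique _ _
  have : p = q := congrArg Subtype.val this
  rw [this, hql]

/-- A neighbor of `j` is at distance `dist i j ± 1` from `i`. -/
lemma tdd_adj_dist (hT : G.IsTree) {i j w : V} (h : G.Adj j w) :
    G.dist i w = G.dist i j + 1 ∨ G.dist i w + 1 = G.dist i j := by
  have h1 : G.dist i w ≤ G.dist i j + 1 := by
    have := hT.isConnected.dist_triangle (u := i) (v := j) (w := w)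
    rwa [(dist_eq_one_iff_adj).2 h] at this
  have h2 : G.dist i j ≤ G.dist i w + 1 := by
    have := hT.isConnected.dist_triangle (u := i) (v := w) (w := j)
    rwa [(dist_eq_one_iff_adj).2 h.symm] at this
  have hne : G.dist i w ≠ G.dist i j := by
    intro heq
    obtain ⟨q, hq, hql⟩ := hT.isConnected.exists_path_of_dist i w
    by_cases hjq : j ∈ q.support
    · have ht : (q.takeUntil j hjq).length = G.dist i j :=
        tdd_path_len hT _ (hq.takeUntil hjq)
      have hspec := q.take_spec hjq
      have hlen : (q.takeUntil j hjq).length + (q.dropUntil j hjq).length = q.length := by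
        rw [← Walk.length_append, hspec]
      have : (q.dropUntil j hjq).length = 0 := by omega
      exact h.ne (Walk.eq_of_length_eq_zero this)
    · have hcp : (q.concat h.symm).IsPath := by
        rw [← Walk.isPath_reverse_iff, Walk.reverse_concat, Walk.cons_isPath_iff]
        exact ⟨hq.reverse, by simpa using hjq⟩
      have := tdd_path_len hT _ hcp
      rw [Walk.length_concat, hql] at this
      omega
  omega

/-- The path from `i` to a strictly closer neighbor avoids `j`. -/
lemma tdd_aux_notmem (hT : G.IsTree) {i j j' : V} (hadj : G.Adj j j')
    (hd : G.dist i j' + 1 = G.dist i j) {q : G.Walk i j'} (hq : q.IsPath)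
    (hql : q.length = G.dist i j') : j ∉ q.support := by
  intro hjq
  have ht : (q.takeUntil j hjq).length = G.dist i j := tdd_path_len hT _ (hq.takeUntil hjq)
  have := q.length_takeUntil_le hjq
  omega

/-- Uniqueness of the neighbor closer to `i` in a tree. -/
lemma tdd_parent_unique (hT : G.IsTree) {i j j' w : V} (h1 : G.Adj j j') (h2 : G.Adj j w)
    (hd1 : G.dist i j' + 1 = G.dist i j) (hd2 : G.dist i w + 1 = G.dist i j) : j' = w := by
  obtain ⟨q1, hq1, hql1⟩ := hT.isConnected.exists_path_of_dist i j'
  obtain ⟨q2, hq2, hql2⟩ := hT.isConnected.exists_path_of_dist i w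
  have hn1 : j ∉ q1.support := tdd_aux_notmem hT h1 hd1 hq1 hql1
  have hn2 : j ∉ q2.support := tdd_aux_notmem hT h2 hd2 hq2 hql2
  have hp1 : (q1.concat h1.symm).IsPath := by
    rw [← Walk.isPath_reverse_iff, Walk.reverse_concat, Walk.cons_isPath_iff]
    exact ⟨hq1.reverse, by simpa using hn1⟩
  have hp2 : (q2.concat h2.symm).IsPath := by
    rw [← Walk.isPath_reverse_iff, Walk.reverse_concat, Walk.cons_isPath_iff]
    exact ⟨hq2.reverse, by simpa using hn2⟩
  have heq : (⟨q1.concat h1.symm, hp1⟩ : G.Path i j) = ⟨q2.concat h2.symm, hp2⟩ :=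
    hT.IsAcyclic.path_unique _ _
  have heqw : q1.concat h1.symm = q2.concat h2.symm := congrArg Subtype.val heq
  have : (q1.concat h1.symm).reverse.getVert 1 = (q2.concat h2.symm).reverse.getVert 1 := by
    rw [heqw]
  rwa [Walk.reverse_concat, Walk.reverse_concat, Walk.getVert_cons_succ,
    Walk.getVert_cons_succ, Walk.getVert_zero, Walk.getVert_zero] at this

/-- Every vertex other than `i` has a neighbor closer to `i`. -/
lemma tdd_parent_exists (hT : G.IsTree) {i j : V} (hne : j ≠ i) :
    ∃ j', G.Adj j j' ∧ G.dist i j' + 1 = G.dist i j := by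
  obtain ⟨q, hq, hql⟩ := hT.isConnected.exists_path_of_dist i j
  have hpos : 0 < q.length := by
    rcases Nat.eq_zero_or_pos q.length with h | h
    · exact absurd (Walk.eq_of_length_eq_zero h) (fun hij => hne hij.symm)
    · exact h
  have hnn : ¬ q.reverse.Nil := by
    rw [Walk.not_nil_iff_lt_length, Walk.length_reverse]; exact hpos
  obtain ⟨u, hadj, q', hq'⟩ := Walk.not_nil_iff.mp hnn
  have hqp' : q'.IsPath := by
    have := hq.reverse
    rw [hq', Walk.cons_isPath_iff] at this
    exact this.1
  have hql' : q'.length = G.dist i j - 1 := by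
    have := congrArg Walk.length hq'
    rw [Walk.length_reverse, Walk.length_cons, hql] at this
    omega
  refine ⟨u, hadj, ?_⟩
  have h3 := tdd_path_len hT q'.reverse hqp'.reverse
  rw [Walk.length_reverse, hql'] at h3
  have hdpos : 0 < G.dist i j := by omega
  omega

end Helpers

theorem tree_diagonal_dominates_by_distance
    {n : ℕ} (T : SimpleGraph (Fin n)) [DecidableRel T.Adj] (hT : T.IsTree)
    (B : Matrix (Fin n) (Fin n) ℝ) (hB : B = (T.lapMatrix ℝ + 1)⁻¹)
    (i : Fin n) :
    ∀ j : Fin n, B i i ≥ (2 : ℝ) ^ (T.dist i j) * B i j := by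
  classical
  set M : Matrix (Fin n) (Fin n) ℝ := T.lapMatrix ℝ + 1 with hMdef
  have hMpd : M.PosDef :=
    Matrix.PosDef.posSemidef_add (T.posSemidef_lapMatrix ℝ) Matrix.PosDef.one
  have hMB : M * B = 1 := by
    rw [hB]; exact Matrix.mul_nonsing_inv M (Matrix.isUnit_iff_isUnit_det M |>.1 hMpd.isUnit)
  -- symmetry of B
  have hBsymm : ∀ a b, B a b = B b a := by
    intro a b
    have hMs : Mᵀ = M := by
      rw [hMdef, Matrix.transpose_add, Matrix.transpose_one, T.isSymm_lapMatrix (R := ℝ)]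
    have hBT : Bᵀ = B := by
      rw [hB, Matrix.transpose_nonsing_inv, hMs]
    have := congrFun (congrFun hBT b) a
    rwa [Matrix.transpose_apply] at this
  set f : Fin n → ℝ := fun v => B v i with hf
  -- the basic equation
  have hEq : ∀ v, (T.degree v : ℝ) * f v + f v - ∑ u ∈ T.neighborFinset v, f u
      = if v = i then 1 else 0 := by
    intro v
    have h1 : (M *ᵥ f) v = (M * B) v i := by
      simp [Matrix.mulVec, Matrix.mul_apply, dotProduct, hf]
    have h2 : (M *ᵥ f) v = (T.degree v : ℝ) * f v - ∑ u ∈ T.neighborFinset v, f u + f v := by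
      rw [hMdef, Matrix.add_mulVec, Pi.add_apply, T.lapMatrix_mulVec_apply, Matrix.one_mulVec]
    rw [hMB, Matrix.one_apply] at h1
    rw [h2] at h1
    rw [← h1]
    ring
  -- nonnegativity
  have hf0 : ∀ v, 0 ≤ f v := by
    obtain ⟨v0, _, hmin⟩ := Finset.exists_min_image Finset.univ f ⟨i, Finset.mem_univ i⟩
    have hsum : (T.degree v0 : ℝ) * f v0 ≤ ∑ u ∈ T.neighborFinset v0, f u := by
      calc (T.degree v0 : ℝ) * f v0 = ∑ _u ∈ T.neighborFinset v0, f v0 := by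
            rw [Finset.sum_const, T.card_neighborFinset_eq_degree, nsmul_eq_mul]
        _ ≤ ∑ u ∈ T.neighborFinset v0, f u :=
            Finset.sum_le_sum fun u _ => hmin u (Finset.mem_univ u)
    have he := hEq v0
    have h0 : (0:ℝ) ≤ if v0 = i then (1:ℝ) else 0 := by positivity
    have hv0 : 0 ≤ f v0 := by
      by_cases hvi : v0 = i
      · rw [if_pos hvi] at he; linarith
      · rw [if_neg hvi] at he; linarith
    intro v; exact le_trans hv0 (hmin v (Finset.mem_univ v))
  -- the key doubling step, by induction
  have hstep : ∀ m : ℕ, ∀ j j' : Fin n, j ≠ i → T.Adj j j' →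
      T.dist i j' + 1 = T.dist i j → n ≤ T.dist i j + m → 2 * f j ≤ f j' := by
    intro m
    induction m with
    | zero =>
      intro j j' hne hadj hd hnle
      exfalso
      obtain ⟨q, hq, hql⟩ := hT.isConnected.exists_path_of_dist i j
      have := hq.length_lt
      rw [hql] at this
      simp only [Fintype.card_fin] at this
      omega
    | succ m ih =>
      intro j j' hne hadj hd hnle
      have he := hEq j
      rw [if_neg hne] at he
      have hjmem : j' ∈ T.neighborFinset j := by
        rw [SimpleGraph.mem_neighborFinset]; exact hadj
      have hsplit : ∑ u ∈ T.neighborFinset j, f u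
          = f j' + ∑ u ∈ (T.neighborFinset j).erase j', f u :=
        (Finset.add_sum_erase _ f hjmem).symm
      have hbound : ∀ u ∈ (T.neighborFinset j).erase j', 2 * f u ≤ f j := by
        intro u hu
        obtain ⟨hune, humem⟩ := Finset.mem_erase.mp hu
        have hadju : T.Adj j u := (SimpleGraph.mem_neighborFinset _ _ _).mp humem
        have hdu : T.dist i u = T.dist i j + 1 := by
          rcases tdd_adj_dist hT hadju (i := i) with h | h
          · exact h
          · exact absurd (tdd_parent_unique hT hadj hadju hd h) (fun e => hune e.symm)
        have huni : u ≠ i := by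
          intro h
          rw [h, SimpleGraph.dist_self] at hdu
          omega
        exact ih u j huni hadju.symm (by omega) (by omega)
      have hsum2 : ∑ u ∈ (T.neighborFinset j).erase j', f u
          ≤ ((T.degree j : ℝ) - 1) * (f j / 2) := by
        have hcard : ((T.neighborFinset j).erase j').card = T.degree j - 1 := by
          rw [Finset.card_erase_of_mem hjmem, T.card_neighborFinset_eq_degree]
        have hdeg1 : 1 ≤ T.degree j := by
          rw [← T.card_neighborFinset_eq_degree]
          exact Finset.card_pos.mpr ⟨j', hjmem⟩
        calc ∑ u ∈ (T.neighborFinset j).erase j', f u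
            ≤ ∑ _u ∈ (T.neighborFinset j).erase j', f j / 2 :=
              Finset.sum_le_sum fun u hu => by linarith [hbound u hu]
          _ = ((T.degree j : ℝ) - 1) * (f j / 2) := by
              rw [Finset.sum_const, hcard, nsmul_eq_mul]
              push_cast [hdeg1]
              ring
      have hdeg1 : (1:ℝ) ≤ (T.degree j : ℝ) := by
        have : 1 ≤ T.degree j := by
          rw [← T.card_neighborFinset_eq_degree]
          exact Finset.card_pos.mpr ⟨j', hjmem⟩
        exact_mod_cast this
      have hfj : 0 ≤ f j := hf0 j
      rw [hsplit] at he
      nlinarith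
  -- main induction on distance
  have hmain : ∀ k : ℕ, ∀ j : Fin n, T.dist i j = k → 2 ^ k * f j ≤ f i := by
    intro k
    induction k with
    | zero =>
      intro j hj
      have : i = j := (hT.isConnected.dist_eq_zero_iff).mp hj
      rw [← this]; simp
    | succ k ih =>
      intro j hj
      have hne : j ≠ i := by
        intro h; rw [h, SimpleGraph.dist_self] at hj; omega
      obtain ⟨j', hadj, hd⟩ := tdd_parent_exists hT hne
      have hd' : T.dist i j' = k := by omega
      have h1 : 2 * f j ≤ f j' := hstep n j j' hne hadj (by omega) (by omega)
      have h2 : 2 ^ k * f j' ≤ f i := ih j' hd'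
      have hpow : (0:ℝ) < 2 ^ k := by positivity
      calc (2:ℝ) ^ (k+1) * f j = 2 ^ k * (2 * f j) := by ring
        _ ≤ 2 ^ k * f j' := by nlinarith
        _ ≤ f i := h2
  intro j
  have := hmain (T.dist i j) j rfl
  rw [hf] at this
  rw [ge_iff_le, hBsymm i j, hBsymm i i]
  exact this
end

section
/- Let G be a connected graph and B_G = [b_{ij}] = (L_G + I)^{-1}. For any vertices v_i \ne v_j there exists a path v_j = v_{j_0}, v_{j_1}, ..., v_{j_k}, v_i in G such that b_{ij} < b_{i,j_1} < ... < b_{i,j_k} < b_{ii}. In particular, b_{ii} > b_{ij} for all j \ne i, i.e., each diagonal entry of B_G is strictly the largest entry in its row and column. -/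
open Finset

private lemma mono_of_step_aux (g : ℕ → ℝ) (k : ℕ) (h : ∀ t ≤ k, g t < g (t + 1)) :
    ∀ s t : ℕ, s < t → t ≤ k + 1 → g s < g t := by
  intro s t
  induction t with
  | zero => omega
  | succ m ih =>
    intro hst htk
    rcases Nat.lt_or_ge s m with h' | h'
    · exact lt_trans (ih h' (by omega)) (h m (by omega))
    · have hsm : s = m := by omega
      subst hsm
      exact h s (by omega)

private lemma aux_pos_step {n : ℕ} (G : SimpleGraph (Fin n)) [DecidableRel G.Adj]
    (hG : G.Connected) (i : Fin n) (f : Fin n → ℝ)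
    (hkey : ∀ j, f j * ((G.degree j : ℝ) + 1) =
      (∑ l ∈ G.neighborFinset j, f l) + (if j = i then 1 else 0)) :
    (∀ j, 0 < f j) ∧ ∀ j, j ≠ i → ∃ l, G.Adj j l ∧ f j < f l := by
  have hcard : ∀ j, ((G.neighborFinset j).card : ℝ) = (G.degree j : ℝ) := by
    intro j; rw [SimpleGraph.card_neighborFinset_eq_degree]
  -- nonnegativity
  have hnonneg : ∀ j, 0 ≤ f j := by
    obtain ⟨j0, _, hmin⟩ := Finset.exists_min_image Finset.univ f ⟨i, Finset.mem_univ i⟩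
    have hjs : ∀ j, f j0 ≤ f j := fun j => hmin j (Finset.mem_univ j)
    have hsum : ((G.degree j0 : ℝ)) * f j0 ≤ ∑ l ∈ G.neighborFinset j0, f l := by
      rw [← hcard]
      have := Finset.card_nsmul_le_sum (G.neighborFinset j0) f (f j0) (fun l _ => hjs l)
      simpa [nsmul_eq_mul] using this
    have h0 : 0 ≤ f j0 := by
      have h := hkey j0
      by_cases hj0 : j0 = i
      · rw [if_pos hj0] at h
        nlinarith [hsum]
      · rw [if_neg hj0] at h
        nlinarith [hsum]
    exact fun j => le_trans h0 (hjs j)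
  -- positivity at i
  have hposi : 0 < f i := by
    have h := hkey i
    rw [if_pos rfl] at h
    have hs : (0:ℝ) ≤ ∑ l ∈ G.neighborFinset i, f l :=
      Finset.sum_nonneg fun l _ => hnonneg l
    have hd : (0:ℝ) ≤ (G.degree i : ℝ) := Nat.cast_nonneg _
    nlinarith
  -- zero propagation
  have hzero : ∀ j l, f j = 0 → G.Adj j l → f l = 0 := by
    intro j l hj hadj
    have hji : j ≠ i := fun h => by rw [h] at hj; exact absurd hj hposi.ne'
    have h := hkey j
    rw [if_neg hji, hj] at h
    have hs : ∑ l ∈ G.neighborFinset j, f l = 0 := by linarith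
    have := (Finset.sum_eq_zero_iff_of_nonneg (fun l _ => hnonneg l)).mp hs
    exact this l ((SimpleGraph.mem_neighborFinset G j l).mpr hadj)
  -- strict positivity
  have hpos : ∀ j, 0 < f j := by
    intro j
    rcases lt_or_eq_of_le (hnonneg j) with h | h
    · exact h
    · exfalso
      have key : ∀ a b : Fin n, G.Walk a b → f a = 0 → f b = 0 := by
        intro a b p
        induction p with
        | nil => exact id
        | cons hadj _ ih => intro ha; exact ih (hzero _ _ ha hadj)
      obtain ⟨p⟩ := hG.preconnected j i
      exact absurd (key j i p h.symm) hposi.ne'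
  refine ⟨hpos, fun j hj => ?_⟩
  by_contra hc
  push_neg at hc
  have hle : ∀ l, G.Adj j l → f l ≤ f j := fun l h => hc l h
  have hsum : ∑ l ∈ G.neighborFinset j, f l ≤ ((G.degree j : ℝ)) * f j := by
    rw [← hcard]
    have := Finset.sum_le_card_nsmul (G.neighborFinset j) f (f j)
      (fun l hl => hle l ((SimpleGraph.mem_neighborFinset G j l).mp hl))
    simpa [nsmul_eq_mul] using this
  have h := hkey j
  rw [if_neg hj] at h
  have := hpos j
  nlinarith

private lemma aux_path {n : ℕ} (G : SimpleGraph (Fin n)) [DecidableRel G.Adj]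
    (i : Fin n) (f : Fin n → ℝ)
    (hstep : ∀ j, j ≠ i → ∃ l, G.Adj j l ∧ f j < f l) :
    ∀ j, j ≠ i → ∃ (k : ℕ) (w : ℕ → Fin n), w 0 = j ∧ w (k + 1) = i ∧
      (∀ t ≤ k, G.Adj (w t) (w (t + 1))) ∧ (∀ t ≤ k, f (w t) < f (w (t + 1))) := by
  suffices H : ∀ N : ℕ, ∀ j : Fin n,
      (Finset.filter (fun l => f j < f l) Finset.univ).card ≤ N → j ≠ i →
      ∃ (k : ℕ) (w : ℕ → Fin n), w 0 = j ∧ w (k + 1) = i ∧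
        (∀ t ≤ k, G.Adj (w t) (w (t + 1))) ∧ (∀ t ≤ k, f (w t) < f (w (t + 1))) by
    intro j hj; exact H _ j le_rfl hj
  intro N
  induction N with
  | zero =>
    intro j hcard hj
    obtain ⟨l, hadj, hlt⟩ := hstep j hj
    exfalso
    have : l ∈ Finset.filter (fun l => f j < f l) Finset.univ := by
      simp [hlt]
    have := Finset.card_pos.mpr ⟨l, this⟩
    omega
  | succ N ih =>
    intro j hcard hj
    obtain ⟨l, hadj, hlt⟩ := hstep j hj
    by_cases hl : l = i
    · subst hl
      refine ⟨0, fun t => if t = 0 then j else l, by simp, by simp, ?_, ?_⟩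
      · intro t ht
        have ht0 : t = 0 := by omega
        subst ht0
        simpa using hadj
      · intro t ht
        have ht0 : t = 0 := by omega
        subst ht0
        simpa using hlt
    · have hmem : l ∈ Finset.filter (fun m => f j < f m) Finset.univ := by simp [hlt]
      have hnotmem : l ∉ Finset.filter (fun m => f l < f m) Finset.univ := by simp
      have hsub : Finset.filter (fun m => f l < f m) Finset.univ ⊆
          Finset.filter (fun m => f j < f m) Finset.univ := by
        intro m hm
        simp only [Finset.mem_filter] at hm ⊢
        exact ⟨hm.1, lt_trans hlt hm.2⟩
      have hss : Finset.filter (fun m => f l < f m) Finset.univ ⊂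
          Finset.filter (fun m => f j < f m) Finset.univ :=
        ⟨hsub, fun h => hnotmem (h hmem)⟩
      have hlt' := Finset.card_lt_card hss
      obtain ⟨k, w, hw0, hwk, hadjw, hmono⟩ := ih l (by omega) hl
      refine ⟨k + 1, fun t => if t = 0 then j else w (t - 1), by simp, ?_, ?_, ?_⟩
      · simpa using hwk
      · intro t ht
        rcases Nat.eq_zero_or_pos t with ht0 | ht0
        · subst ht0; simpa [hw0] using hadj
        · have h1 : t ≠ 0 := by omega
          have h2 : t + 1 ≠ 0 := by omega
          simp only [if_neg h1, if_neg h2]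
          have h3 : t + 1 - 1 = (t - 1) + 1 := by omega
          rw [h3]
          exact hadjw (t - 1) (by omega)
      · intro t ht
        rcases Nat.eq_zero_or_pos t with ht0 | ht0
        · subst ht0; simpa [hw0] using hlt
        · have h1 : t ≠ 0 := by omega
          have h2 : t + 1 ≠ 0 := by omega
          simp only [if_neg h1, if_neg h2]
          have h3 : t + 1 - 1 = (t - 1) + 1 := by omega
          rw [h3]
          exact hmono (t - 1) (by omega)

theorem connected_graph_increasing_path_to_diagonal
    {n : ℕ} (G : SimpleGraph (Fin n)) [DecidableRel G.Adj] (hG : G.Connected)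
    (B : Matrix (Fin n) (Fin n) ℝ) (hB : B = (G.lapMatrix ℝ + 1)⁻¹) :
    (∀ i j : Fin n, i ≠ j →
      ∃ (k : ℕ) (w : ℕ → Fin n), w 0 = j ∧ w (k + 1) = i ∧
        (∀ t ≤ k, G.Adj (w t) (w (t + 1))) ∧
        (∀ s ≤ k + 1, ∀ t ≤ k + 1, w s = w t → s = t) ∧
        (∀ t ≤ k, B i (w t) < B i (w (t + 1)))) ∧
    (∀ i j : Fin n, i ≠ j → B i j < B i i) := by
  have hA : Matrix.PosDef (G.lapMatrix ℝ + 1) :=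
    Matrix.PosDef.posSemidef_add (SimpleGraph.posSemidef_lapMatrix ℝ G) Matrix.PosDef.one
  have hBA : B * (G.lapMatrix ℝ + 1) = 1 := by
    rw [hB]
    exact Matrix.nonsing_inv_mul _ ((Matrix.isUnit_iff_isUnit_det _).mp hA.isUnit)
  have key : ∀ i j : Fin n, B i j * ((G.degree j : ℝ) + 1) =
      (∑ l ∈ G.neighborFinset j, B i l) + (if j = i then 1 else 0) := by
    intro i j
    have h : (B * (G.lapMatrix ℝ + 1)) i j = (1 : Matrix (Fin n) (Fin n) ℝ) i j := by
      rw [hBA]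
    rw [Matrix.mul_add, Matrix.mul_one, SimpleGraph.lapMatrix, Matrix.mul_sub] at h
    rw [Matrix.add_apply, Matrix.sub_apply, SimpleGraph.degMatrix,
      Matrix.mul_diagonal, SimpleGraph.mul_adjMatrix_apply, Matrix.one_apply] at h
    have hif : (if i = j then (1:ℝ) else 0) = (if j = i then 1 else 0) := by
      by_cases hij : i = j <;> simp [hij, Ne.symm, eq_comm]
    rw [hif] at h
    linarith [h]
  have main : ∀ i j : Fin n, i ≠ j →
      ∃ (k : ℕ) (w : ℕ → Fin n), w 0 = j ∧ w (k + 1) = i ∧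
        (∀ t ≤ k, G.Adj (w t) (w (t + 1))) ∧
        (∀ s ≤ k + 1, ∀ t ≤ k + 1, w s = w t → s = t) ∧
        (∀ t ≤ k, B i (w t) < B i (w (t + 1))) := by
    intro i j hij
    obtain ⟨hpos, hstep⟩ := aux_pos_step G hG i (fun l => B i l) (key i)
    obtain ⟨k, w, hw0, hwk, hadjw, hmono⟩ :=
      aux_path G i (fun l => B i l) hstep j (Ne.symm hij)
    refine ⟨k, w, hw0, hwk, hadjw, ?_, hmono⟩
    intro s hs t ht hwst
    by_contra hst
    rcases Nat.lt_or_ge s t with h' | h'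
    · exact absurd (congrArg (fun x => B i x) hwst)
        (mono_of_step_aux (fun t => B i (w t)) k hmono s t h' ht).ne
    · have h'' : t < s := by omega
      exact absurd (congrArg (fun x => B i x) hwst.symm)
        (mono_of_step_aux (fun t => B i (w t)) k hmono t s h'' hs).ne
  refine ⟨main, ?_⟩
  intro i j hij
  obtain ⟨k, w, hw0, hwk, _, _, hmono⟩ := main i j hij
  have := mono_of_step_aux (fun t => B i (w t)) k hmono 0 (k + 1) (by omega) le_rfl
  simpa [hw0, hwk] using this
end

section
/- For the path P_n, the last column of B_{P_n} = (L_{P_n} + I)^{-1} is (1/f_{2n}) (f_1, f_3, f_5, ..., f_{2n-3}, f_{2n-1}), where f_k is the k-th Fibonacci number; in particular the (n,n) entry of B_{P_n} is f_{2n-1}/f_{2n} and the (1,n) entry is 1/f_{2n}. -/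
open SimpleGraph Matrix Finset

lemma sum_adj_path (n : ℕ) [DecidableRel (SimpleGraph.pathGraph n).Adj] (i : Fin n) (g : Fin n → ℝ) :
    ∑ j : Fin n, (if (SimpleGraph.pathGraph n).Adj i j then g j else 0)
    = (if h : i.1 + 1 < n then g ⟨i.1 + 1, h⟩ else 0)
      + (if h : 0 < i.1 then g ⟨i.1 - 1, by omega⟩ else 0) := by
  simp_rw [SimpleGraph.pathGraph_adj]
  have split : ∀ j : Fin n, (if (i.1 + 1 = j.1 ∨ j.1 + 1 = i.1) then g j else 0)
      = (if i.1 + 1 = j.1 then g j else 0) + (if j.1 + 1 = i.1 then g j else 0) := by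
    intro j
    by_cases h1 : i.1 + 1 = j.1 <;> by_cases h2 : j.1 + 1 = i.1 <;>
      simp [h1, h2] <;> omega
  simp_rw [split, Finset.sum_add_distrib]
  congr 1
  · by_cases h : i.1 + 1 < n
    · rw [dif_pos h]
      rw [Finset.sum_eq_single (⟨i.1 + 1, h⟩ : Fin n)]
      · simp
      · intro j _ hj
        rw [if_neg]
        intro hc
        exact hj (Fin.ext hc.symm)
      · simp
    · rw [dif_neg h]
      apply Finset.sum_eq_zero
      intro j _
      rw [if_neg]
      intro hc
      exact h (hc ▸ j.isLt)
  · by_cases h : 0 < i.1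
    · rw [dif_pos h]
      rw [Finset.sum_eq_single (⟨i.1 - 1, by omega⟩ : Fin n)]
      · rw [if_pos (show i.1 - 1 + 1 = i.1 by omega)]
      · intro j _ hj
        rw [if_neg]
        intro hc
        exact hj (Fin.ext (show j.1 = i.1 - 1 by omega))
      · simp
    · rw [dif_neg h]
      apply Finset.sum_eq_zero
      intro j _
      rw [if_neg]
      omega

lemma three_fib (k : ℕ) : Nat.fib (k + 5) + Nat.fib (k + 1) = 3 * Nat.fib (k + 3) := by
  have a := Nat.fib_add_two (n := k + 3)
  have b := Nat.fib_add_two (n := k + 2)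
  have c := Nat.fib_add_two (n := k + 1)
  ring_nf at a b c ⊢
  omega

lemma two_fib (k : ℕ) : Nat.fib (k + 4) + Nat.fib (k + 1) = 2 * Nat.fib (k + 3) := by
  have a := Nat.fib_add_two (n := k + 2)
  have b := Nat.fib_add_two (n := k + 1)
  ring_nf at a b ⊢
  omega

lemma path_mulVec (n : ℕ) (hn : 1 ≤ n) (i : Fin n) :
    letI : DecidableRel (SimpleGraph.pathGraph n).Adj := Classical.decRel _
    (((SimpleGraph.pathGraph n).lapMatrix ℝ + 1) *ᵥ (fun j => (Nat.fib (2 * j.1 + 1) : ℝ))) i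
    = if i.1 = n - 1 then (Nat.fib (2 * n) : ℝ) else 0 := by
  letI : DecidableRel (SimpleGraph.pathGraph n).Adj := Classical.decRel _
  rw [add_mulVec, one_mulVec, Pi.add_apply, SimpleGraph.lapMatrix_mulVec_apply]
  have h1 : ((SimpleGraph.pathGraph n).degree i : ℝ) * (Nat.fib (2 * i.1 + 1) : ℝ)
      - ∑ u ∈ (SimpleGraph.pathGraph n).neighborFinset i, (Nat.fib (2 * u.1 + 1) : ℝ)
      = ∑ j : Fin n, (if (SimpleGraph.pathGraph n).Adj i j then
          ((Nat.fib (2 * i.1 + 1) : ℝ) - (Nat.fib (2 * j.1 + 1) : ℝ)) else 0) := by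
    rw [SimpleGraph.degree_eq_sum_if_adj, SimpleGraph.neighborFinset_eq_filter,
      Finset.sum_filter, Finset.sum_mul, ← Finset.sum_sub_distrib]
    apply Finset.sum_congr rfl
    intro j _
    split <;> simp
  rw [h1, sum_adj_path]
  have val1 : ∀ h : i.1 + 1 < n, ((⟨i.1 + 1, h⟩ : Fin n)).1 = i.1 + 1 := fun _ => rfl
  by_cases hA : i.1 + 1 < n <;> by_cases hB : 0 < i.1
  · -- interior
    obtain ⟨m, hm⟩ : ∃ m, i.1 = m + 1 := ⟨i.1 - 1, by omega⟩
    rw [dif_pos hA, dif_pos hB, if_neg (by omega)]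
    rw [show ((⟨i.1 + 1, hA⟩ : Fin n)).1 = i.1 + 1 from rfl,
      show ((⟨i.1 - 1, by omega⟩ : Fin n)).1 = i.1 - 1 from rfl]
    have hR := congrArg (Nat.cast : ℕ → ℝ) (three_fib (2 * m))
    push_cast at hR
    rw [show 2 * (i.1 + 1) + 1 = 2 * m + 5 by omega, show 2 * i.1 + 1 = 2 * m + 3 by omega,
      show 2 * (i.1 - 1) + 1 = 2 * m + 1 by omega]
    linarith
  · -- i = 0, n ≥ 2
    rw [dif_pos hA, dif_neg hB, if_neg (by omega)]
    rw [show ((⟨i.1 + 1, hA⟩ : Fin n)).1 = i.1 + 1 from rfl]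
    rw [show 2 * i.1 + 1 = 1 by omega, show 2 * (i.1 + 1) + 1 = 3 by omega]
    have h1 : Nat.fib 1 = 1 := rfl
    have h3 : Nat.fib 3 = 2 := rfl
    rw [h1, h3]
    norm_num
  · -- i = n - 1 > 0
    obtain ⟨m, hm⟩ : ∃ m, n = m + 2 := ⟨n - 2, by omega⟩
    rw [dif_neg hA, dif_pos hB, if_pos (by omega)]
    rw [show ((⟨i.1 - 1, by omega⟩ : Fin n)).1 = i.1 - 1 from rfl]
    have hR := congrArg (Nat.cast : ℕ → ℝ) (two_fib (2 * m))
    push_cast at hR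
    rw [show 2 * i.1 + 1 = 2 * m + 3 by omega, show 2 * (i.1 - 1) + 1 = 2 * m + 1 by omega,
      show 2 * n = 2 * m + 4 by omega]
    linarith
  · -- n = 1
    rw [dif_neg hA, dif_neg hB, if_pos (by omega)]
    rw [show 2 * i.1 + 1 = 1 by omega, show 2 * n = 2 by omega]
    norm_num [Nat.fib_one, Nat.fib_two]

theorem pathB_last_column (n : ℕ) (hn : 1 ≤ n) :
    (∀ i : Fin n, pathB n i ⟨n - 1, by omega⟩ =
      (Nat.fib (2 * i.1 + 1) : ℝ) / (Nat.fib (2 * n))) ∧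
    pathB n ⟨n - 1, by omega⟩ ⟨n - 1, by omega⟩ =
      (Nat.fib (2 * n - 1) : ℝ) / (Nat.fib (2 * n)) ∧
    pathB n ⟨0, by omega⟩ ⟨n - 1, by omega⟩ = 1 / (Nat.fib (2 * n) : ℝ) := by
  letI : DecidableRel (SimpleGraph.pathGraph n).Adj := Classical.decRel _
  set A : Matrix (Fin n) (Fin n) ℝ := (SimpleGraph.pathGraph n).lapMatrix ℝ + 1 with hAdef
  have hpB : pathB n = A⁻¹ := rfl
  have hpd : A.PosDef :=
    Matrix.PosDef.posSemidef_add
      (SimpleGraph.posSemidef_lapMatrix ℝ (SimpleGraph.pathGraph n)) Matrix.PosDef.one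
  have hdet : IsUnit A.det := hpd.det_pos.ne'.isUnit
  have hinv : A⁻¹ * A = 1 := Matrix.nonsing_inv_mul A hdet
  have hfib : (0 : ℝ) < (Nat.fib (2 * n) : ℝ) :=
    Nat.cast_pos.mpr (Nat.fib_pos.mpr (by omega))
  set w : Fin n → ℝ := fun j => (Nat.fib (2 * j.1 + 1) : ℝ) with hwdef
  have hAw : A *ᵥ w = fun k : Fin n => if k.1 = n - 1 then (Nat.fib (2 * n) : ℝ) else 0 :=
    funext (path_mulVec n hn)
  have hw : ∀ i : Fin n, A⁻¹ i ⟨n - 1, by omega⟩ * (Nat.fib (2 * n) : ℝ) = w i := by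
    intro i
    have h2 : A⁻¹ *ᵥ (A *ᵥ w) = w := by
      rw [Matrix.mulVec_mulVec, hinv, Matrix.one_mulVec]
    rw [hAw] at h2
    have h3 := congrFun h2 i
    rw [Matrix.mulVec, dotProduct] at h3
    rw [Finset.sum_eq_single (⟨n - 1, by omega⟩ : Fin n)] at h3
    · rwa [if_pos rfl] at h3
    · intro j _ hj
      rw [if_neg, mul_zero]
      intro hc
      exact hj (Fin.ext (by simpa using hc))
    · simp
  have hmain : ∀ i : Fin n, pathB n i ⟨n - 1, by omega⟩ =
      (Nat.fib (2 * i.1 + 1) : ℝ) / (Nat.fib (2 * n)) := by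
    intro i
    rw [hpB, eq_div_iff hfib.ne']
    exact hw i
  refine ⟨hmain, ?_, ?_⟩
  · rw [hmain ⟨n - 1, by omega⟩]
    have he : 2 * ((⟨n - 1, by omega⟩ : Fin n)).1 + 1 = 2 * n - 1 := by
      show 2 * (n - 1) + 1 = 2 * n - 1
      omega
    rw [he]
  · rw [hmain ⟨0, by omega⟩]
    norm_num
end

section
/- Let T be a tree rooted at vertex v_i with all edges directed away from v_i, and let x be the i-th column of B_T = (L_T + I)^{-1}. Define the multiplier m_{pk} = x_p / x_k for each directed edge (v_p, v_k). Then for every directed edge (v_p, v_k): 2 \le (1/2) d_k + 3/2 \le m_{pk} \le d_k + 1, where d_k is the degree of v_k in T, with m_{pk} = 2 whenever v_k is a pendant vertex. -/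
open SimpleGraph Finset Matrix

/-- In a finite connected graph, distances are less than the number of vertices. -/
lemma tmb_dist_lt {n : ℕ} (T : SimpleGraph (Fin n)) (hC : T.Connected) (a b : Fin n) :
    T.dist a b < n := by
  obtain ⟨P, hP, hl⟩ := hC.exists_path_of_dist a b
  have := hP.length_lt
  simpa [hl, Fintype.card_fin] using this.trans_le (le_of_eq (Fintype.card_fin n))

/-- Concat of a path with a new vertex is a path. -/
lemma tmb_concat_isPath {n : ℕ} {T : SimpleGraph (Fin n)} {a b c : Fin n}
    {P : T.Walk a b} (hP : P.IsPath) (h : T.Adj b c) (hc : c ∉ P.support) :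
    (P.concat h).IsPath := by
  rw [← SimpleGraph.Walk.isPath_reverse_iff, SimpleGraph.Walk.reverse_concat,
    SimpleGraph.Walk.cons_isPath_iff]
  exact ⟨hP.reverse, by simpa [SimpleGraph.Walk.support_reverse] using hc⟩

/-- In a tree, every neighbor of `k` other than its parent `p` is a child of `k`. -/
lemma tmb_parent {n : ℕ} (T : SimpleGraph (Fin n)) (hT : T.IsTree) (i p k u : Fin n)
    (hpk : T.Adj p k) (hd : T.dist i p + 1 = T.dist i k)
    (hku : T.Adj k u) (hup : u ≠ p) : T.dist i u = T.dist i k + 1 := by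
  have hC : T.Connected := hT.isConnected
  -- upper bound
  have hub : T.dist i u ≤ T.dist i k + 1 := by
    have := hC.dist_triangle (u := i) (v := k) (w := u)
    rwa [(SimpleGraph.dist_eq_one_iff_adj).mpr hku] at this
  -- the canonical path to k via p
  obtain ⟨P, hP, hPl⟩ := hC.exists_path_of_dist i p
  have hkP : k ∉ P.support := by
    intro hk
    have h1 : T.dist i k ≤ (P.takeUntil k hk).length := SimpleGraph.dist_le _
    have h2 := SimpleGraph.Walk.length_takeUntil_le P hk
    omega
  have hPP : (P.concat hpk).IsPath := tmb_concat_isPath hP hpk hkP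
  -- lower bound: suppose dist i u ≤ dist i k
  have hlb : ¬ T.dist i u ≤ T.dist i k := by
    intro hle
    obtain ⟨W, hW, hWl⟩ := hC.exists_path_of_dist i u
    by_cases hkW : k ∈ W.support
    · -- then k = u, contradiction with adjacency
      have h1 : T.dist i k ≤ (W.takeUntil k hkW).length := SimpleGraph.dist_le _
      have h2 := SimpleGraph.Walk.length_takeUntil_le W hkW
      have hspec := W.take_spec hkW
      have hlen : (W.takeUntil k hkW).length + (W.dropUntil k hkW).length = W.length := by
        rw [← SimpleGraph.Walk.length_append, hspec]
      have : (W.dropUntil k hkW).length = 0 := by omega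
      exact hku.ne (SimpleGraph.Walk.eq_of_length_eq_zero this)
    · have hWW : (W.concat hku.symm).IsPath := tmb_concat_isPath hW hku.symm hkW
      have huniq := (hT.existsUnique_path i k).unique hPP hWW
      have : (P.concat hpk).reverse.getVert 1 = (W.concat hku.symm).reverse.getVert 1 := by
        rw [huniq]
      rw [SimpleGraph.Walk.reverse_concat, SimpleGraph.Walk.reverse_concat,
        SimpleGraph.Walk.getVert_cons_succ (n := 0), SimpleGraph.Walk.getVert_cons_succ (n := 0),
        SimpleGraph.Walk.getVert_zero, SimpleGraph.Walk.getVert_zero] at this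
      exact hup this.symm
  omega

/-- Main induction: bounds on the multipliers. -/
lemma tmb_main {n : ℕ} (T : SimpleGraph (Fin n)) [DecidableRel T.Adj] (hT : T.IsTree)
    (i : Fin n) (x : Fin n → ℝ)
    (hpos : ∀ v, 0 < x v)
    (heq : ∀ v, v ≠ i → ((T.degree v : ℝ) + 1) * x v = ∑ u ∈ T.neighborFinset v, x u) :
    ∀ N : ℕ, ∀ p k : Fin n, n - T.dist i k ≤ N → T.Adj p k → T.dist i p + 1 = T.dist i k →
      ((T.degree k : ℝ) + 3) / 2 * x k ≤ x p ∧ x p ≤ ((T.degree k : ℝ) + 1) * x k := by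
  have hC : T.Connected := hT.isConnected
  intro N
  induction N with
  | zero =>
      intro p k hN hadj hdir
      have := tmb_dist_lt T hC i k
      omega
  | succ N ih =>
      intro p k hN hadj hdir
      have hki : k ≠ i := by
        intro h; rw [h, SimpleGraph.dist_self] at hdir; omega
      have hpmem : p ∈ T.neighborFinset k :=
        (SimpleGraph.mem_neighborFinset T k p).mpr hadj.symm
      have hdeg1 : 1 ≤ T.degree k := by
        rw [Nat.one_le_iff_ne_zero]
        intro h
        have := T.card_neighborFinset_eq_degree k
        rw [h, Finset.card_eq_zero] at this
        simp [this] at hpmem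
      set S := (T.neighborFinset k).erase p with hS
      have hsum : ((T.degree k : ℝ) + 1) * x k = x p + ∑ u ∈ S, x u := by
        rw [heq k hki, ← Finset.add_sum_erase _ x hpmem]
      have hcardS : S.card = T.degree k - 1 := by
        rw [hS, Finset.card_erase_of_mem hpmem, T.card_neighborFinset_eq_degree]
      -- each child satisfies x u ≤ x k / 2
      have hchild : ∀ u ∈ S, x u ≤ x k / 2 := by
        intro u hu
        have hune : u ≠ p := Finset.ne_of_mem_erase hu
        have hadjku : T.Adj k u := (SimpleGraph.mem_neighborFinset T k u).mp
          (Finset.mem_of_mem_erase hu)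
        have hdistu : T.dist i u = T.dist i k + 1 := tmb_parent T hT i p k u hadj hdir hadjku hune
        have hult := tmb_dist_lt T hC i u
        have hN' : n - T.dist i u ≤ N := by omega
        have hIH := ih k u hN' hadjku (by omega)
        have hdegu : 1 ≤ T.degree u := by
          rw [Nat.one_le_iff_ne_zero]
          intro h
          have hum : k ∈ T.neighborFinset u := (SimpleGraph.mem_neighborFinset T u k).mpr hadjku.symm
          have := T.card_neighborFinset_eq_degree u
          rw [h, Finset.card_eq_zero] at this
          simp [this] at hum
        have h2 : 2 * x u ≤ x k := by
          have h1 : ((T.degree u : ℝ) + 3) / 2 * x u ≤ x k := hIH.1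
          have h3 : (2 : ℝ) ≤ ((T.degree u : ℝ) + 3) / 2 := by
            have : (1 : ℝ) ≤ (T.degree u : ℝ) := by exact_mod_cast hdegu
            linarith
          nlinarith [(hpos u).le]
        linarith
      have hsumS_le : ∑ u ∈ S, x u ≤ (S.card : ℝ) * (x k / 2) := by
        calc ∑ u ∈ S, x u ≤ S.card • (x k / 2) := Finset.sum_le_card_nsmul S x _ hchild
        _ = (S.card : ℝ) * (x k / 2) := by rw [nsmul_eq_mul]
      have hsumS_nonneg : 0 ≤ ∑ u ∈ S, x u :=
        Finset.sum_nonneg fun u _ => (hpos u).le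
      have hcardcast : (S.card : ℝ) = (T.degree k : ℝ) - 1 := by
        rw [hcardS, Nat.cast_sub hdeg1]; norm_num
      constructor
      · have : x p = ((T.degree k : ℝ) + 1) * x k - ∑ u ∈ S, x u := by linarith
        rw [this]
        have := hpos k
        rw [hcardcast] at hsumS_le
        nlinarith
      · linarith

theorem tree_multiplier_bounds
    {n : ℕ} (T : SimpleGraph (Fin n)) [DecidableRel T.Adj] (hT : T.IsTree)
    (B : Matrix (Fin n) (Fin n) ℝ) (hB : B = (T.lapMatrix ℝ + 1)⁻¹)
    (i : Fin n) (x : Fin n → ℝ) (hx : ∀ v, x v = B v i)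
    -- `(v_p, v_k)` is an edge of `T` directed away from the root `v_i`
    (p k : Fin n) (hadj : T.Adj p k) (hdir : T.dist i p + 1 = T.dist i k) :
    (2 ≤ (1 / 2 : ℝ) * (T.degree k) + 3 / 2 ∧
      (1 / 2 : ℝ) * (T.degree k) + 3 / 2 ≤ x p / x k ∧
      x p / x k ≤ (T.degree k : ℝ) + 1) ∧
    (T.degree k = 1 → x p / x k = 2) := by
  have hC : T.Connected := hT.isConnected
  set A : Matrix (Fin n) (Fin n) ℝ := T.lapMatrix ℝ + 1 with hA
  have hpd : A.PosDef :=
    Matrix.PosDef.posSemidef_add (SimpleGraph.posSemidef_lapMatrix ℝ T) Matrix.PosDef.one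
  have hunit : IsUnit A.det := (Matrix.isUnit_iff_isUnit_det A).mp hpd.isUnit
  have hAB : A * B = 1 := by rw [hB]; exact Matrix.mul_nonsing_inv A hunit
  -- the linear equation satisfied by x
  have heq0 : ∀ v, ((T.degree v : ℝ) + 1) * x v - ∑ u ∈ T.neighborFinset v, x u
      = if v = i then 1 else 0 := by
    intro v
    have h1 : (A * B) v i = (1 : Matrix (Fin n) (Fin n) ℝ) v i := by rw [hAB]
    have h2 : (A * B) v i = (A *ᵥ x) v := by
      rw [Matrix.mul_apply, Matrix.mulVec]
      simp only [dotProduct]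
      congr 1; ext j; rw [hx j]
    have h3 : (A *ᵥ x) v
        = ((T.degree v : ℝ) + 1) * x v - ∑ u ∈ T.neighborFinset v, x u := by
      rw [hA, Matrix.add_mulVec, Matrix.one_mulVec, Pi.add_apply,
        SimpleGraph.lapMatrix_mulVec_apply]
      ring
    rw [← h3, ← h2, h1, Matrix.one_apply]
  -- positivity of x
  have hnonneg : ∀ v, 0 ≤ x v := by
    obtain ⟨v0, _, hmin⟩ := Finset.exists_min_image Finset.univ x ⟨i, Finset.mem_univ i⟩
    have hminle : ∀ u, x v0 ≤ x u := fun u => hmin u (Finset.mem_univ u)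
    have hsum_ge : (T.degree v0 : ℝ) * x v0 ≤ ∑ u ∈ T.neighborFinset v0, x u := by
      have := Finset.card_nsmul_le_sum (T.neighborFinset v0) x (x v0)
        (fun u _ => hminle u)
      rwa [T.card_neighborFinset_eq_degree, nsmul_eq_mul] at this
    have h0 := heq0 v0
    have hv0 : 0 ≤ x v0 := by
      by_cases h : v0 = i
      · rw [if_pos h] at h0; nlinarith
      · rw [if_neg h] at h0; nlinarith
    exact fun v => le_trans hv0 (hminle v)
  have hpos : ∀ v, 0 < x v := by
    -- first, zero propagates to neighbors away from i
    have hzclosed : ∀ v, v ≠ i → x v = 0 → ∀ u, T.Adj v u → x u = 0 := by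
      intro v hvi hv0 u hadjvu
      have h0 := heq0 v
      rw [if_neg hvi, hv0, mul_zero, zero_sub, neg_eq_zero] at h0
      have := (Finset.sum_eq_zero_iff_of_nonneg (fun u _ => hnonneg u)).mp h0
      exact this u ((SimpleGraph.mem_neighborFinset T v u).mpr hadjvu)
    have hxi : x i ≠ 0 := by
      intro h
      have h0 := heq0 i
      rw [if_pos rfl, h, mul_zero, zero_sub] at h0
      have : 0 ≤ ∑ u ∈ T.neighborFinset i, x u :=
        Finset.sum_nonneg fun u _ => hnonneg u
      linarith
    intro v
    rcases lt_or_eq_of_le (hnonneg v) with h | h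
    · exact h
    · exfalso
      -- propagate zero along a walk from v to i
      have hwalk : ∀ (a b : Fin n) (W : T.Walk a b), x a = 0 → b = i → x i = 0 := by
        intro a b W
        induction W with
        | nil => intro h0 hbi; rwa [← hbi]
        | @cons u v w hadj' q ihW =>
            intro h0 hwi
            by_cases hui : u = i
            · rwa [← hui]
            · exact ihW (hzclosed u hui h0 v hadj') hwi
      obtain ⟨W⟩ := hC.preconnected v i
      exact hxi (hwalk v i W h.symm rfl)
  have heq' : ∀ v, v ≠ i → ((T.degree v : ℝ) + 1) * x v = ∑ u ∈ T.neighborFinset v, x u := by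
    intro v hv
    have := heq0 v
    rw [if_neg hv] at this
    linarith
  have hmain := tmb_main T hT i x hpos heq' n p k (by omega) hadj hdir
  have hdeg1 : 1 ≤ T.degree k := by
    rw [Nat.one_le_iff_ne_zero]
    intro h
    have hpmem : p ∈ T.neighborFinset k := (SimpleGraph.mem_neighborFinset T k p).mpr hadj.symm
    have := T.card_neighborFinset_eq_degree k
    rw [h, Finset.card_eq_zero] at this
    simp [this] at hpmem
  have hdeg1R : (1 : ℝ) ≤ (T.degree k : ℝ) := by exact_mod_cast hdeg1
  have hxk := hpos k
  refine ⟨⟨by linarith, ?_, ?_⟩, ?_⟩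
  · rw [le_div_iff₀ hxk]
    have := hmain.1
    nlinarith
  · rw [div_le_iff₀ hxk]
    exact hmain.2
  · intro hdk
    have hki : k ≠ i := by
      intro h; rw [h, SimpleGraph.dist_self] at hdir; omega
    have hpmem : p ∈ T.neighborFinset k := (SimpleGraph.mem_neighborFinset T k p).mpr hadj.symm
    have hcard : (T.neighborFinset k).card = 1 := by
      rw [T.card_neighborFinset_eq_degree, hdk]
    obtain ⟨a, ha⟩ := Finset.card_eq_one.mp hcard
    have hap : a = p := by
      rw [ha] at hpmem; exact (Finset.mem_singleton.mp hpmem).symm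
    have := heq' k hki
    rw [ha, hap, Finset.sum_singleton, hdk] at this
    rw [div_eq_iff hxk.ne']
    push_cast at this
    linarith
end

section
/- Let T be a tree in which every non-pendant vertex has degree exactly 3, rooted at v_i with edges directed away from v_i, and let m_{pk} = x_p/x_k be the multipliers of the i-th column x of B_T = (L_T + I)^{-1}. Then for every directed edge (v_p, v_k) where v_k is a non-pendant vertex, 3 \le m_{pk} \le 4. -/
open SimpleGraph Finset Matrix


variable {n : ℕ}

/-- distance is less than the number of vertices -/
lemma aux_dist_lt (T : SimpleGraph (Fin n)) (hT : T.Connected) (i k : Fin n) :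
    T.dist i k < n := by
  obtain ⟨w, hw⟩ := (hT i k).exists_walk_length_eq_dist
  have hp : w.IsPath := w.isPath_of_length_eq_dist hw
  have := hp.length_lt
  simpa [hw] using this

/-- uniqueness of the parent -/
lemma aux_parent_unique {T : SimpleGraph (Fin n)} (hT : T.IsTree) {i u w k : Fin n}
    (hu : T.Adj u k) (hw : T.Adj w k) (hdu : T.dist i u + 1 = T.dist i k)
    (hdw : T.dist i w + 1 = T.dist i k) : u = w := by
  obtain ⟨P, hP⟩ := (hT.isConnected i u).exists_walk_length_eq_dist
  obtain ⟨Q, hQ⟩ := (hT.isConnected i w).exists_walk_length_eq_dist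
  set P' : T.Walk i k := (Walk.cons hu.symm P.reverse).reverse with hP'def
  set Q' : T.Walk i k := (Walk.cons hw.symm Q.reverse).reverse with hQ'def
  have hP'len : P'.length = T.dist i k := by
    simp [hP'def, Walk.length_reverse, Walk.length_cons, hP, ← hdu]
  have hQ'len : Q'.length = T.dist i k := by
    simp [hQ'def, Walk.length_reverse, Walk.length_cons, hQ, ← hdw]
  have hP'path : P'.IsPath := P'.isPath_of_length_eq_dist hP'len
  have hQ'path : Q'.IsPath := Q'.isPath_of_length_eq_dist hQ'len
  have heq : P' = Q' := by
    have := hT.IsAcyclic.path_unique ⟨P', hP'path⟩ ⟨Q', hQ'path⟩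
    exact congrArg Subtype.val this
  have heq2 : (Walk.cons hu.symm P.reverse) = (Walk.cons hw.symm Q.reverse) := by
    have := congrArg Walk.reverse heq
    simpa [hP'def, hQ'def] using this
  have := congrArg (fun z => Walk.getVert z 1) heq2
  simpa [Walk.getVert_cons_succ] using this


/-- in a tree, a neighbor of `k` is at distance `dist i k ± 1` from `i` -/
lemma aux_neighbor_dist {T : SimpleGraph (Fin n)} (hT : T.IsTree) {i u k : Fin n}
    (h : T.Adj k u) :
    T.dist i u + 1 = T.dist i k ∨ T.dist i k + 1 = T.dist i u := by
  have h1 : T.dist i u ≤ T.dist i k + 1 := by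
    calc T.dist i u ≤ T.dist i k + T.dist k u := hT.isConnected.dist_triangle
    _ = T.dist i k + 1 := by rw [(dist_eq_one_iff_adj).mpr h]
  have h2 : T.dist i k ≤ T.dist i u + 1 := by
    calc T.dist i k ≤ T.dist i u + T.dist u k := hT.isConnected.dist_triangle
    _ = T.dist i u + 1 := by rw [(dist_eq_one_iff_adj).mpr h.symm]
  have hne : T.dist i u ≠ T.dist i k := by
    intro hctr
    obtain ⟨P, hP⟩ := (hT.isConnected i u).exists_walk_length_eq_dist
    obtain ⟨Q, hQ⟩ := (hT.isConnected i k).exists_walk_length_eq_dist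
    have hPpath : P.IsPath := P.isPath_of_length_eq_dist hP
    have hQpath : Q.IsPath := Q.isPath_of_length_eq_dist hQ
    have hkns : k ∉ P.support := by
      intro hmem
      have hsplit := P.take_spec hmem
      have hlen : (P.takeUntil k hmem).length + (P.dropUntil k hmem).length = P.length := by
        rw [← Walk.length_append, hsplit]
      have hik : T.dist i k ≤ (P.takeUntil k hmem).length := dist_le _
      have hku : T.dist k u ≤ (P.dropUntil k hmem).length := dist_le _
      have hku1 : T.dist k u = 1 := (dist_eq_one_iff_adj).mpr h
      omega
    set P' : T.Walk i k := (Walk.cons h P.reverse).reverse with hP'def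
    have hP'path : P'.IsPath := by
      apply Walk.IsPath.reverse
      apply hPpath.reverse.cons
      simpa using hkns
    have heq : P' = Q := by
      have := hT.IsAcyclic.path_unique ⟨P', hP'path⟩ ⟨Q, hQpath⟩
      exact congrArg Subtype.val this
    have : P'.length = Q.length := by rw [heq]
    simp only [hP'def, Walk.length_reverse, Walk.length_cons, hP, hQ] at this
    omega
  omega


lemma aux_exists_parent {T : SimpleGraph (Fin n)} (hT : T.Connected) {i k : Fin n}
    (h : k ≠ i) : ∃ p, T.Adj p k ∧ T.dist i p + 1 = T.dist i k := by
  obtain ⟨w, hw⟩ := (hT i k).exists_walk_length_eq_dist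
  have hq : w.reverse.length = T.dist i k := by simp [hw]
  generalize hqq : w.reverse = q at hq
  clear hqq hw w
  cases q with
  | nil => exact absurd rfl h
  | @cons _ u _ hadj r =>
    refine ⟨u, hadj.symm, ?_⟩
    have h1 : T.dist i u ≤ r.length := by
      have := dist_le r.reverse
      simpa [dist_comm] using this
    have h2 : T.dist i k ≤ T.dist i u + 1 := by
      calc T.dist i k ≤ T.dist i u + T.dist u k := hT.dist_triangle
      _ = T.dist i u + 1 := by rw [(dist_eq_one_iff_adj).mpr hadj.symm]
    simp only [Walk.length_cons] at hq
    omega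


lemma aux_matrix (T : SimpleGraph (Fin n)) [DecidableRel T.Adj]
    (B : Matrix (Fin n) (Fin n) ℝ) (hB : B = (T.lapMatrix ℝ + 1)⁻¹)
    (i : Fin n) (x : Fin n → ℝ) (hx : ∀ v, x v = B v i) :
    (0 < x i) ∧ ∀ v, v ≠ i →
      (T.degree v : ℝ) * x v + x v = ∑ u ∈ T.neighborFinset v, x u := by
  have hpd : ((T.lapMatrix ℝ + 1)).PosDef :=
    Matrix.PosDef.posSemidef_add (posSemidef_lapMatrix ℝ T) Matrix.PosDef.one
  have hBpd : B.PosDef := hB ▸ hpd.inv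
  have hBinv : (T.lapMatrix ℝ + 1) * B = 1 := by
    rw [hB]
    exact Matrix.mul_nonsing_inv _ ((Matrix.isUnit_iff_isUnit_det _).mp hpd.isUnit)
  constructor
  · have hv : (Pi.single i 1 : Fin n → ℝ) ≠ 0 := by
      intro hctr
      have := congrFun hctr i
      simp at this
    have := hBpd.dotProduct_mulVec_pos hv
    simpa [dotProduct, Pi.single_apply, Matrix.mulVec, hx i] using this
  · intro v hv
    have h1 := congrFun (congrFun hBinv v) i
    rw [Matrix.mul_apply] at h1
    have h2 : ∀ j, B j i = x j := fun j => (hx j).symm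
    simp only [h2] at h1
    have h3 : ∑ j, (T.lapMatrix ℝ + 1) v j * x j = ((T.lapMatrix ℝ + 1) *ᵥ x) v := rfl
    rw [h3, Matrix.add_mulVec, Matrix.one_mulVec, Pi.add_apply,
      lapMatrix_mulVec_apply, Matrix.one_apply, if_neg hv] at h1
    linarith

lemma aux_multiplier {T : SimpleGraph (Fin n)} [DecidableRel T.Adj] (hT : T.IsTree)
    (hdeg3 : ∀ v : Fin n, T.degree v ≠ 1 → T.degree v = 3)
    {i : Fin n} {x : Fin n → ℝ}
    (heq : ∀ v, v ≠ i → (T.degree v : ℝ) * x v + x v = ∑ u ∈ T.neighborFinset v, x u) :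
    ∀ (d : ℕ) (p k : Fin n), T.Adj p k → T.dist i p + 1 = T.dist i k →
      n ≤ d + T.dist i k →
      ∃ m : ℝ, 2 ≤ m ∧ m ≤ 4 ∧ (T.degree k ≠ 1 → 3 ≤ m) ∧ x p = m * x k := by
  intro d
  induction d with
  | zero =>
    intro p k _ _ hn
    exact absurd (aux_dist_lt T hT.isConnected i k) (by omega)
  | succ d ih =>
    intro p k hadj hdir hn
    have hki : k ≠ i := by
      have hd0 : T.dist i k ≠ 0 := by omega
      exact ((dist_ne_zero_iff_ne_and_reachable.mp hd0).1).symm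
    set C := (T.neighborFinset k).erase p with hCdef
    have hchild : ∀ u ∈ C, T.Adj k u ∧ T.dist i k + 1 = T.dist i u := by
      intro u hu
      rw [hCdef, Finset.mem_erase, mem_neighborFinset] at hu
      refine ⟨hu.2, ?_⟩
      rcases aux_neighbor_dist hT (i := i) hu.2 with hcase | hcase
      · exact absurd (aux_parent_unique hT hu.2.symm hadj hcase hdir) hu.1
      · exact hcase
    have hm : ∀ u : Fin n, ∃ m : ℝ, 2 ≤ m ∧ m ≤ 4 ∧ (u ∈ C → x k = m * x u) := by
      intro u
      by_cases hu : u ∈ C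
      · obtain ⟨hadj', hdir'⟩ := hchild u hu
        obtain ⟨m, h2, h4, _, hxe⟩ := ih k u hadj' hdir' (by omega)
        exact ⟨m, h2, h4, fun _ => hxe⟩
      · exact ⟨2, le_refl _, by norm_num, fun h => absurd h hu⟩
    choose g hg1 hg2 hg3 using hm
    have hgpos : ∀ u, (0:ℝ) < g u := fun u => lt_of_lt_of_le two_pos (hg1 u)
    have hsum : ∀ u ∈ C, x u = (g u)⁻¹ * x k := by
      intro u hu
      have h := hg3 u hu
      have hgne : g u ≠ 0 := ne_of_gt (hgpos u)
      field_simp [h]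
      rw [h]; ring
    have hpN : p ∈ T.neighborFinset k := by
      rw [mem_neighborFinset]; exact hadj.symm
    have hCcard : C.card + 1 = T.degree k := by
      rw [hCdef, Finset.card_erase_of_mem hpN, T.card_neighborFinset_eq_degree]
      have : 1 ≤ T.degree k := by
        rw [← T.card_neighborFinset_eq_degree]
        exact Finset.card_pos.mpr ⟨p, hpN⟩
      omega
    have hN : T.neighborFinset k = insert p C := by
      rw [hCdef, Finset.insert_erase hpN]
    have he := heq k hki
    rw [hN, Finset.sum_insert (by simp [hCdef])] at he
    have hsC : ∑ u ∈ C, x u = (∑ u ∈ C, (g u)⁻¹) * x k := by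
      rw [Finset.sum_mul]
      exact Finset.sum_congr rfl hsum
    set s := ∑ u ∈ C, (g u)⁻¹ with hsdef
    have hs_up : s ≤ (C.card : ℝ) * 2⁻¹ := by
      rw [hsdef]
      calc ∑ u ∈ C, (g u)⁻¹ ≤ ∑ _u ∈ C, (2:ℝ)⁻¹ := by
            apply Finset.sum_le_sum
            intro u _
            exact inv_anti₀ two_pos (hg1 u)
      _ = (C.card : ℝ) * 2⁻¹ := by rw [Finset.sum_const, nsmul_eq_mul]
    have hs_lo : (C.card : ℝ) * 4⁻¹ ≤ s := by
      rw [hsdef]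
      calc (C.card : ℝ) * 4⁻¹ = ∑ _u ∈ C, (4:ℝ)⁻¹ := by rw [Finset.sum_const, nsmul_eq_mul]
      _ ≤ ∑ u ∈ C, (g u)⁻¹ := by
            apply Finset.sum_le_sum
            intro u _
            exact inv_anti₀ (hgpos u) (hg2 u)
    refine ⟨(T.degree k : ℝ) + 1 - s, ?_, ?_, ?_, ?_⟩
    case _ =>  -- 2 ≤ m
      rcases eq_or_ne (T.degree k) 1 with hdk | hdk
      · have hc0 : C.card = 0 := by omega
        have : s ≤ 0 := by
          have := hs_up; rw [hc0] at this; simpa using this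
        rw [hdk]; push_cast; linarith
      · have hdk3 := hdeg3 k hdk
        have hc2 : C.card = 2 := by omega
        have : s ≤ 1 := by
          have := hs_up; rw [hc2] at this; norm_num at this; linarith
        rw [hdk3]; push_cast; linarith
    case _ =>  -- m ≤ 4
      have hsnn : 0 ≤ s := by
        rw [hsdef]
        apply Finset.sum_nonneg
        intro u _
        exact le_of_lt (inv_pos.mpr (hgpos u))
      rcases eq_or_ne (T.degree k) 1 with hdk | hdk
      · rw [hdk]; push_cast; linarith
      · rw [hdeg3 k hdk]; push_cast; linarith
    case _ =>  -- internal: 3 ≤ m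
      intro hdk
      have hdk3 := hdeg3 k hdk
      have hc2 : C.card = 2 := by omega
      have : s ≤ 1 := by
        have := hs_up; rw [hc2] at this; norm_num at this; linarith
      rw [hdk3]; push_cast; linarith
    case _ =>  -- x p = m * x k
      rw [hsC] at he
      ring_nf
      ring_nf at he
      linarith

lemma aux_positive {T : SimpleGraph (Fin n)} [DecidableRel T.Adj] (hT : T.IsTree)
    (hdeg3 : ∀ v : Fin n, T.degree v ≠ 1 → T.degree v = 3)
    {i : Fin n} {x : Fin n → ℝ} (hxi : 0 < x i)
    (heq : ∀ v, v ≠ i → (T.degree v : ℝ) * x v + x v = ∑ u ∈ T.neighborFinset v, x u) :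
    ∀ k, 0 < x k := by
  suffices H : ∀ (d : ℕ) (k : Fin n), T.dist i k ≤ d → 0 < x k by
    intro k; exact H (T.dist i k) k le_rfl
  intro d
  induction d with
  | zero =>
    intro k hk
    have : i = k := (hT.isConnected.dist_eq_zero_iff).mp (by omega)
    rwa [← this]
  | succ d ih =>
    intro k hk
    rcases le_or_gt (T.dist i k) d with hle | hlt
    · exact ih k hle
    · have hdk : T.dist i k = d + 1 := by omega
      have hki : k ≠ i := by
        intro hctr
        rw [hctr, dist_self] at hdk
        omega
      obtain ⟨q, hqadj, hqdir⟩ := aux_exists_parent hT.isConnected hki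
      have hq : 0 < x q := ih q (by omega)
      obtain ⟨m, hm2, _, _, hxe⟩ :=
        aux_multiplier hT hdeg3 heq n q k hqadj hqdir (by omega)
      by_contra hcon
      push_neg at hcon
      have : m * x k ≤ 0 := mul_nonpos_of_nonneg_of_nonpos (by linarith) hcon
      linarith

theorem degree_three_tree_multiplier_bounds
    {n : ℕ} (T : SimpleGraph (Fin n)) [DecidableRel T.Adj] (hT : T.IsTree)
    (hdeg3 : ∀ v : Fin n, T.degree v ≠ 1 → T.degree v = 3)
    (B : Matrix (Fin n) (Fin n) ℝ) (hB : B = (T.lapMatrix ℝ + 1)⁻¹)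
    (i : Fin n) (x : Fin n → ℝ) (hx : ∀ v, x v = B v i)
    -- `(v_p, v_k)` is an edge of `T` directed away from the root `v_i`
    (p k : Fin n) (hadj : T.Adj p k) (hdir : T.dist i p + 1 = T.dist i k)
    (hk : T.degree k ≠ 1) :
    3 ≤ x p / x k ∧ x p / x k ≤ 4 := by
  obtain ⟨hxi, heq⟩ := aux_matrix T B hB i x hx
  have hpos := aux_positive hT hdeg3 hxi heq
  obtain ⟨m, _, hm4, hm3, hxe⟩ :=
    aux_multiplier hT hdeg3 heq n p k hadj hdir (by omega)
  have hxk : x k ≠ 0 := ne_of_gt (hpos k)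
  have hdiv : x p / x k = m := by
    rw [hxe]
    field_simp
  rw [hdiv]
  exact ⟨hm3 hk, hm4⟩
end

section
/- For h > 0, the matrix \tilde{L}_G^h = I + h L_G is positive definite, invertible, and its inverse (\tilde{L}_G^h)^{-1} is doubly stochastic. -/
open scoped Matrix


theorem h_modified_laplacian_posDef_doubly_stochastic
    {n : ℕ} (G : SimpleGraph (Fin n)) [DecidableRel G.Adj]
    (h : ℝ) (hh : 0 < h) :
    ((1 : Matrix (Fin n) (Fin n) ℝ) + h • G.lapMatrix ℝ).PosDef ∧
    IsUnit ((1 : Matrix (Fin n) (Fin n) ℝ) + h • G.lapMatrix ℝ) ∧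
    (∀ i j, 0 ≤ ((1 : Matrix (Fin n) (Fin n) ℝ) + h • G.lapMatrix ℝ)⁻¹ i j) ∧
    (∀ i, ∑ j, ((1 : Matrix (Fin n) (Fin n) ℝ) + h • G.lapMatrix ℝ)⁻¹ i j = 1) ∧
    (∀ j, ∑ i, ((1 : Matrix (Fin n) (Fin n) ℝ) + h • G.lapMatrix ℝ)⁻¹ i j = 1) := by
  set A : Matrix (Fin n) (Fin n) ℝ := 1 + h • G.lapMatrix ℝ with hAdef
  have hL := SimpleGraph.posSemidef_lapMatrix ℝ G
  have hsm : (h • G.lapMatrix ℝ).PosSemidef := by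
    refine Matrix.PosSemidef.of_dotProduct_mulVec_nonneg ?_ (fun x => ?_)
    · unfold Matrix.IsHermitian
      rw [Matrix.conjTranspose_smul]
      rw [hL.1]
      simp
    · rw [Matrix.smul_mulVec, dotProduct_smul]
      exact mul_nonneg hh.le (hL.dotProduct_mulVec_nonneg x)
  have hPD : A.PosDef := Matrix.PosDef.one.add_posSemidef hsm
  have hdet : IsUnit A.det := isUnit_iff_ne_zero.mpr hPD.det_pos.ne'
  have hU : IsUnit A := (Matrix.isUnit_iff_isUnit_det A).mpr hdet
  have hmul : A * A⁻¹ = 1 := Matrix.mul_nonsing_inv A hdet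
  have hinvmul : A⁻¹ * A = 1 := Matrix.nonsing_inv_mul A hdet
  -- the Laplacian acting on a vector with a minimum at i is nonpositive there
  have hAx : ∀ (x : Fin n → ℝ) (i : Fin n), (∀ m, x i ≤ x m) → x i ≥ (A *ᵥ x) i := by
    intro x i hmin
    have hexp : (A *ᵥ x) i = x i + h * ((G.lapMatrix ℝ *ᵥ x) i) := by
      rw [hAdef, Matrix.add_mulVec, Matrix.one_mulVec, Matrix.smul_mulVec]
      rfl
    have hlap : (G.lapMatrix ℝ *ᵥ x) i ≤ 0 := by
      rw [SimpleGraph.lapMatrix_mulVec_apply]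
      have hdeg : (G.degree i : ℝ) * x i = ∑ _u ∈ G.neighborFinset i, x i := by
        rw [Finset.sum_const, SimpleGraph.degree, nsmul_eq_mul]
      rw [hdeg, ← Finset.sum_sub_distrib]
      exact Finset.sum_nonpos fun u _ => sub_nonpos.mpr (hmin u)
    rw [hexp]
    nlinarith
  have hnonneg : ∀ i j, 0 ≤ A⁻¹ i j := by
    intro k j
    obtain ⟨i, -, hi⟩ := Finset.exists_min_image Finset.univ (fun m => A⁻¹ m j)
      ⟨k, Finset.mem_univ k⟩
    have hmin : ∀ m, A⁻¹ i j ≤ A⁻¹ m j := fun m => hi m (Finset.mem_univ m)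
    refine le_trans ?_ (hmin k)
    have h1 : (A *ᵥ fun m => A⁻¹ m j) i = (1 : Matrix (Fin n) (Fin n) ℝ) i j := by
      have := congrFun (congrFun hmul i) j
      simpa [Matrix.mul_apply, Matrix.mulVec, dotProduct] using this
    have h2 := hAx (fun m => A⁻¹ m j) i hmin
    rw [h1] at h2
    have h3 : (0 : ℝ) ≤ (1 : Matrix (Fin n) (Fin n) ℝ) i j := by
      by_cases hij : i = j <;> simp [Matrix.one_apply, hij]
    exact le_trans h3 h2
  have hones : A *ᵥ (fun _ => 1) = fun _ => 1 := by
    rw [hAdef, Matrix.add_mulVec, Matrix.one_mulVec, Matrix.smul_mulVec,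
      SimpleGraph.lapMatrix_mulVec_const_eq_zero, smul_zero]
    funext i
    simp
  have hrow : ∀ i, ∑ j, A⁻¹ i j = 1 := by
    intro i
    have : (A⁻¹ *ᵥ fun _ => 1) i = 1 := by
      conv_lhs => rw [← hones, Matrix.mulVec_mulVec, hinvmul, Matrix.one_mulVec]
    simpa [Matrix.mulVec, dotProduct] using this
  have hsymm : Aᵀ = A := by
    rw [hAdef, Matrix.transpose_add, Matrix.transpose_one, Matrix.transpose_smul,
      (SimpleGraph.isSymm_lapMatrix ℝ G)]
  have hinvsymm : (A⁻¹)ᵀ = A⁻¹ := by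
    rw [Matrix.transpose_nonsing_inv, hsymm]
  have hcol : ∀ j, ∑ i, A⁻¹ i j = 1 := by
    intro j
    have : ∑ i, A⁻¹ i j = ∑ i, (A⁻¹)ᵀ j i := by
      simp [Matrix.transpose_apply]
    rw [this, hinvsymm]
    exact hrow j
  exact ⟨hPD, hU, hnonneg, hrow, hcol⟩
end

section
/- Let h > 0 and suppose G has a pendant vertex j adjacent to vertex k. Then the inverse B = [b_{ij}] of I + h L_G satisfies b_{ik} = ((1+h)/h) b_{ij} for every i \ne j. -/
theorem pendant_vertex_entries_h
    {n : ℕ} (G : SimpleGraph (Fin n)) [DecidableRel G.Adj]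
    (h : ℝ) (hh : 0 < h)
    (B : Matrix (Fin n) (Fin n) ℝ)
    (hB : B = ((1 : Matrix (Fin n) (Fin n) ℝ) + h • G.lapMatrix ℝ)⁻¹)
    (j k : Fin n) (hdeg : G.degree j = 1) (hadj : G.Adj j k) :
    ∀ i : Fin n, i ≠ j → B i k = ((1 + h) / h) * B i j := by
  set M : Matrix (Fin n) (Fin n) ℝ := (1 : Matrix (Fin n) (Fin n) ℝ) + h • G.lapMatrix ℝ with hM
  -- M is positive definite
  have hLsd : (h • G.lapMatrix ℝ).PosSemidef := by
    have hL := SimpleGraph.posSemidef_lapMatrix ℝ G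
    refine ⟨?_, fun x => ?_⟩
    · unfold Matrix.IsHermitian
      rw [Matrix.conjTranspose_smul, hL.1]
      simp
    · exact (hL.smul hh.le).2 x
  have hMpd : M.PosDef := Matrix.PosDef.add_posSemidef Matrix.PosDef.one hLsd
  have hdet : IsUnit M.det := hMpd.det_pos.ne'.isUnit
  have hBM : B * M = 1 := by rw [hB]; exact Matrix.nonsing_inv_mul M hdet
  -- j's unique neighbor is k
  have hjk : j ≠ k := G.ne_of_adj hadj
  have hnbr : G.neighborFinset j = {k} := by
    obtain ⟨a, ha⟩ := Finset.card_eq_one.mp hdeg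
    have hk : k ∈ G.neighborFinset j := (SimpleGraph.mem_neighborFinset G j k).mpr hadj
    rw [ha] at hk ⊢
    rw [Finset.mem_singleton.mp hk]
  have hAdj : ∀ l : Fin n, G.Adj l j ↔ l = k := by
    intro l
    rw [G.adj_comm, ← SimpleGraph.mem_neighborFinset, hnbr, Finset.mem_singleton]
  -- entries of column j of M
  have hentry : ∀ l : Fin n, M l j =
      (1 + h) * (if l = j then 1 else 0) - h * (if l = k then 1 else 0) := by
    intro l
    simp only [hM, Matrix.add_apply, Matrix.smul_apply, Matrix.one_apply,
      SimpleGraph.lapMatrix, Matrix.sub_apply, SimpleGraph.degMatrix,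
      Matrix.diagonal_apply, SimpleGraph.adjMatrix_apply, smul_eq_mul]
    by_cases hlj : l = j
    · subst hlj
      have : ¬ G.Adj l l := G.irrefl
      have hlk : ¬ (l = k) := hjk
      simp [this, hlk, hdeg]
    · by_cases hlk : l = k
      · subst hlk
        have : G.Adj l j := (hAdj l).mpr rfl
        simp [hlj, this]
      · have : ¬ G.Adj l j := fun hc => hlk ((hAdj l).mp hc)
        simp [hlj, hlk, this]
  intro i hij
  have h0 : (B * M) i j = 0 := by
    rw [hBM, Matrix.one_apply_ne hij]
  rw [Matrix.mul_apply] at h0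
  have hterm : ∀ l : Fin n, B i l * M l j =
      (1 + h) * (if l = j then B i l else 0) - h * (if l = k then B i l else 0) := by
    intro l
    rw [hentry l]
    split_ifs <;> ring
  rw [Finset.sum_congr rfl (fun l _ => hterm l), Finset.sum_sub_distrib,
    ← Finset.mul_sum, ← Finset.mul_sum, Finset.sum_ite_eq' Finset.univ j (B i),
    Finset.sum_ite_eq' Finset.univ k (B i)] at h0
  simp only [Finset.mem_univ, if_true] at h0
  field_simp
  linarith
end
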